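/- arXiv:2411.19110 — 8 statements merged into one kernel-verified Lean document; each statement's English description precedes it below -/
import Mathlib

section
/- Every triangle-free graph G with m edges satisfies ρ(G) ≤ √m, where ρ(G) is the largest eigenvalue of the adjacency matrix of G. -/
open scoped Classical
open SimpleGraph Matrix

def ContainsCopy {α β : Type*} (H : SimpleGraph α) (G : SimpleGraph β) : Prop :=
  ∃ f : α ↪ β, ∀ a b, H.Adj a b → G.Adj (f a) (f b)

def gem : SimpleGraph (Fin 5) :=
  SimpleGraph.fromRel (fun a b => (b.val = a.val + 1 ∧ b.val ≤ 3) ∨ b = 4)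

def bookS (k : ℕ) : SimpleGraph (Fin 2 ⊕ Fin k) :=
  SimpleGraph.fromRel (fun a _ => a.isLeft = true)

def pendantS (s t : ℕ) : SimpleGraph (Fin 2 ⊕ (Fin s ⊕ Fin t)) :=
  SimpleGraph.fromRel (fun a b =>
    match a, b with
    | Sum.inl _, Sum.inl _ => True
    | Sum.inl _, Sum.inr (Sum.inl _) => True
    | Sum.inl i, Sum.inr (Sum.inr _) => i = 0
    | _, _ => False)

def starG (r : ℕ) : SimpleGraph (Fin (r + 1)) :=
  SimpleGraph.fromRel (fun a _ => a = 0)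

noncomputable def specRad {V : Type*} [Fintype V] (G : SimpleGraph V) : ℝ :=
  sSup {μ : ℝ | Module.End.HasEigenvalue (Matrix.mulVecLin (G.adjMatrix ℝ)) μ}

noncomputable def edgeCount {V : Type*} [Fintype V] (G : SimpleGraph V) : ℕ :=
  G.edgeFinset.card

noncomputable def edgesIn {V : Type*} [Fintype V] (G : SimpleGraph V) (S : Finset V) : ℕ :=
  (G.edgeFinset.filter (fun e => ∀ v ∈ e, v ∈ S)).card

noncomputable def N0 {V : Type*} [Fintype V] (G : SimpleGraph V) (u : V) : Finset V :=
  (G.neighborFinset u).filter (fun v => ∀ w ∈ G.neighborFinset u, ¬ G.Adj v w)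

noncomputable def Nplus {V : Type*} [Fintype V] (G : SimpleGraph V) (u : V) : Finset V :=
  G.neighborFinset u \ N0 G u

noncomputable def Wset {V : Type*} [Fintype V] (G : SimpleGraph V) (u : V) : Finset V :=
  Finset.univ \ insert u (G.neighborFinset u)

def InFamily (m : ℕ) {V : Type*} [Fintype V] (G : SimpleGraph V) : Prop :=
  ¬ ContainsCopy gem G ∧ edgeCount G = m ∧ (∀ v : V, ∃ w, G.Adj v w) ∧
    ¬ Nonempty (G ≃g bookS ((m - 1) / 2))

def MaxInFamily (m : ℕ) {V : Type*} [Fintype V] (G : SimpleGraph V) : Prop :=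
  InFamily m G ∧ ∀ (n : ℕ) (H : SimpleGraph (Fin n)), InFamily m H → specRad H ≤ specRad G

def IsCutVertex {V : Type*} (G : SimpleGraph V) (v : V) : Prop :=
  ∃ a b : {x : V // x ≠ v}, G.Reachable a.1 b.1 ∧
    ¬ (G.induce {x : V | x ≠ v}).Reachable a b

/-!
Take an eigenvector `x` for the eigenvalue `μ` and a vertex `u` where `|x|` is maximal. Applying
the adjacency matrix twice gives `μ² |x u| ≤ (∑_{v ~ u} deg v) |x u|`. In a triangle-free graph the
neighbourhood of `u` is independent, so the edges at distinct neighbours are distinct and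
`∑_{v ~ u} deg v ≤ m`.
-/

open Finset

namespace SimpleGraph

variable {V : Type*} {G : SimpleGraph V}

theorem IsIndepSet.sum_degree_le_card_edgeFinset [Fintype V] [DecidableRel G.Adj]
    {s : Finset V} (hs : G.IsIndepSet s) : ∑ v ∈ s, G.degree v ≤ #G.edgeFinset := by
  have hdisj : (s : Set V).PairwiseDisjoint fun v => G.incidenceFinset v := by
    intro v hv w hw hvw
    rw [Function.onFun, ← disjoint_coe, coe_incidenceFinset, coe_incidenceFinset,
      Set.disjoint_iff_inter_eq_empty]
    exact G.incidenceSet_inter_incidenceSet_of_not_adj (hs hv hw hvw) hvw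
  calc ∑ v ∈ s, G.degree v = ∑ v ∈ s, #(G.incidenceFinset v) := by
        simp only [card_incidenceFinset_eq_degree]
    _ = #(s.biUnion fun v => G.incidenceFinset v) := (card_biUnion hdisj).symm
    _ ≤ #G.edgeFinset := card_le_card (biUnion_subset.2 fun v _ => G.incidenceFinset_subset v)

theorem CliqueFree.sum_degree_neighborFinset_le [Fintype V] [DecidableRel G.Adj]
    (h : G.CliqueFree 3) (u : V) : ∑ v ∈ G.neighborFinset u, G.degree v ≤ #G.edgeFinset :=
  IsIndepSet.sum_degree_le_card_edgeFinset <| by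
    simpa only [coe_neighborFinset] using isIndepSet_neighborSet_of_triangleFree _ h u

theorem abs_mul_abs_le_sum_abs_of_adjMatrix_mulVec_eq_smul [Fintype V] [DecidableRel G.Adj]
    {x : V → ℝ} {μ : ℝ} (hx : G.adjMatrix ℝ *ᵥ x = μ • x) (u : V) :
    |μ| * |x u| ≤ ∑ v ∈ G.neighborFinset u, |x v| := by
  calc |μ| * |x u| = |∑ v ∈ G.neighborFinset u, x v| := by
        rw [← adjMatrix_mulVec_apply, hx, Pi.smul_apply, smul_eq_mul, abs_mul]
    _ ≤ ∑ v ∈ G.neighborFinset u, |x v| := abs_sum_le_sum_abs _ _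

theorem sq_le_of_hasEigenvalue_adjMatrix [Fintype V] [DecidableRel G.Adj] {μ C : ℝ}
    (hμ : Module.End.HasEigenvalue (G.adjMatrix ℝ).mulVecLin μ)
    (hC : ∀ u, ∑ v ∈ G.neighborFinset u, (G.degree v : ℝ) ≤ C) : μ ^ 2 ≤ C := by
  obtain ⟨x, hx⟩ := hμ.exists_hasEigenvector
  have hAx : G.adjMatrix ℝ *ᵥ x = μ • x := hx.apply_eq_smul
  obtain ⟨v₀, hv₀⟩ := Function.ne_iff.mp hx.2
  obtain ⟨u, -, hu⟩ := exists_max_image univ (fun v => |x v|) ⟨v₀, mem_univ _⟩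
  have hxu : 0 < |x u| := (abs_pos.mpr hv₀).trans_le (hu v₀ (mem_univ _))
  have key := abs_mul_abs_le_sum_abs_of_adjMatrix_mulVec_eq_smul hAx
  refine le_of_mul_le_mul_right ?_ hxu
  calc μ ^ 2 * |x u| = |μ| * (|μ| * |x u|) := by rw [← mul_assoc, ← sq, sq_abs]
    _ ≤ |μ| * ∑ v ∈ G.neighborFinset u, |x v| := by gcongr; exact key u
    _ = ∑ v ∈ G.neighborFinset u, |μ| * |x v| := mul_sum _ _ _
    _ ≤ ∑ v ∈ G.neighborFinset u, ∑ w ∈ G.neighborFinset v, |x w| := sum_le_sum fun v _ => key v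
    _ ≤ ∑ v ∈ G.neighborFinset u, ∑ _w ∈ G.neighborFinset v, |x u| :=
        sum_le_sum fun v _ => sum_le_sum fun w _ => hu w (mem_univ _)
    _ = (∑ v ∈ G.neighborFinset u, (G.degree v : ℝ)) * |x u| := by
        simp only [sum_const, card_neighborFinset_eq_degree, nsmul_eq_mul, sum_mul]
    _ ≤ C * |x u| := by gcongr; exact hC u

end SimpleGraph

theorem stmt0 {V : Type*} [Fintype V] (G : SimpleGraph V) (m : ℕ)
    (hm : edgeCount G = m) (htf : G.CliqueFree 3) :
    specRad G ≤ Real.sqrt m := by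
  refine Real.sSup_le (fun μ hμ => ?_) (Real.sqrt_nonneg _)
  have hsq : μ ^ 2 ≤ m := sq_le_of_hasEigenvalue_adjMatrix hμ fun u => by
    rw [← hm, edgeCount]
    exact_mod_cast htf.sum_degree_neighborFinset_le u
  exact (le_abs_self μ).trans (Real.abs_le_sqrt hsq)
end

section
/- Every non-bipartite triangle-free graph G with m edges satisfies ρ(G) ≤ √(m−1). -/
open scoped Classical
open SimpleGraph Matrix

lemma key_count {V : Type*} [Fintype V] (G : SimpleGraph V)
    (htf : G.CliqueFree 3) (hnb : ¬ G.Colorable 2) (u : V) :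
    (∑ v ∈ G.neighborFinset u, G.degree v) + 1 ≤ G.edgeFinset.card := by
  classical
  have hind : ∀ v ∈ G.neighborFinset u, ∀ w ∈ G.neighborFinset u, ¬ G.Adj v w := by
    intro v hv w hw hvw
    rw [SimpleGraph.mem_neighborFinset] at hv hw
    exact htf {u, v, w} (SimpleGraph.is3Clique_triple_iff.mpr ⟨hv, hw, hvw⟩)
  have hedge : ∃ e ∈ G.edgeFinset, ∀ v ∈ e, v ∉ G.neighborFinset u := by
    by_contra h
    push_neg at h
    refine hnb ⟨SimpleGraph.Coloring.mk
      (fun v => if v ∈ G.neighborFinset u then (0 : Fin 2) else 1) ?_⟩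
    intro a b hab
    by_cases ha : a ∈ G.neighborFinset u <;> by_cases hb : b ∈ G.neighborFinset u
    · exact absurd hab (hind a ha b hb)
    · simp [ha, hb]
    · simp [ha, hb]
    · obtain ⟨v, hv, hv'⟩ := h s(a, b) (SimpleGraph.mem_edgeFinset.mpr hab)
      rcases Sym2.mem_iff.mp hv with rfl | rfl
      exacts [absurd hv' ha, absurd hv' hb]
  obtain ⟨e0, he0, he0'⟩ := hedge
  have hdisj : ∀ v ∈ G.neighborFinset u, ∀ w ∈ G.neighborFinset u, v ≠ w →
      Disjoint (G.incidenceFinset v) (G.incidenceFinset w) := by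
    intro v hv w hw hvw
    rw [Finset.disjoint_left]
    intro e hev hew
    rw [SimpleGraph.mem_incidenceFinset] at hev hew
    have he : e = s(v, w) := (Sym2.mem_and_mem_iff hvw).mp ⟨hev.2, hew.2⟩
    have : G.Adj v w := G.mem_edgeSet.mp (he ▸ hev.1)
    exact hind v hv w hw this
  set B := (G.neighborFinset u).biUnion (fun v => G.incidenceFinset v) with hB
  have hcard : ∑ v ∈ G.neighborFinset u, G.degree v = B.card := by
    rw [hB, Finset.card_biUnion hdisj]
    exact Finset.sum_congr rfl fun v _ => (G.card_incidenceFinset_eq_degree v).symm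
  have hnotmem : e0 ∉ B := by
    intro h
    obtain ⟨v, hv, hev⟩ := Finset.mem_biUnion.mp h
    rw [SimpleGraph.mem_incidenceFinset] at hev
    exact he0' v hev.2 hv
  have hsub : insert e0 B ⊆ G.edgeFinset := by
    intro e he
    rcases Finset.mem_insert.mp he with rfl | he
    · exact he0
    · obtain ⟨v, hv, hev⟩ := Finset.mem_biUnion.mp he
      rw [SimpleGraph.mem_incidenceFinset] at hev
      exact SimpleGraph.mem_edgeFinset.mpr hev.1
  calc (∑ v ∈ G.neighborFinset u, G.degree v) + 1 = B.card + 1 := by rw [hcard]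
    _ = (insert e0 B).card := (Finset.card_insert_of_notMem hnotmem).symm
    _ ≤ G.edgeFinset.card := Finset.card_le_card hsub

theorem stmt1 {V : Type*} [Fintype V] (G : SimpleGraph V) (m : ℕ)
    (hm : edgeCount G = m) (htf : G.CliqueFree 3) (hnb : ¬ G.Colorable 2) :
    specRad G ≤ Real.sqrt ((m : ℝ) - 1) := by
  classical
  have hV : Nonempty V := by
    by_contra h
    exact hnb ⟨SimpleGraph.Coloring.mk (fun v => ((h ⟨v⟩).elim : Fin 2))
      (fun {a b} _ => (h ⟨a⟩).elim)⟩
  apply Real.sSup_le _ (Real.sqrt_nonneg _)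
  intro μ hμ
  rcases le_or_gt μ 0 with hμ0 | hμ0
  · exact hμ0.trans (Real.sqrt_nonneg _)
  obtain ⟨x, hx⟩ := hμ.exists_hasEigenvector
  have hxeq : (G.adjMatrix ℝ).mulVec x = μ • x := hx.apply_eq_smul
  obtain ⟨u, -, hu⟩ := Finset.exists_max_image Finset.univ (fun v => |x v|)
    ⟨Classical.arbitrary V, Finset.mem_univ _⟩
  have hxu : 0 < |x u| := by
    obtain ⟨v, hv⟩ := Function.ne_iff.mp hx.2
    exact lt_of_lt_of_le (abs_pos.mpr hv) (hu v (Finset.mem_univ v))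
  have h2 : (G.adjMatrix ℝ).mulVec ((G.adjMatrix ℝ).mulVec x) = (μ ^ 2) • x := by
    rw [hxeq, Matrix.mulVec_smul, hxeq, smul_smul]
    ring_nf
  have h2u := congrFun h2 u
  rw [SimpleGraph.adjMatrix_mulVec_apply, Pi.smul_apply, smul_eq_mul] at h2u
  have key : μ ^ 2 * |x u| ≤ (∑ v ∈ G.neighborFinset u, (G.degree v : ℝ)) * |x u| := by
    calc μ ^ 2 * |x u| = |μ ^ 2 * x u| := by
          rw [abs_mul, abs_of_nonneg (sq_nonneg μ)]
      _ = |∑ v ∈ G.neighborFinset u, ((G.adjMatrix ℝ).mulVec x) v| := by rw [h2u]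
      _ ≤ ∑ v ∈ G.neighborFinset u, |((G.adjMatrix ℝ).mulVec x) v| :=
          Finset.abs_sum_le_sum_abs _ _
      _ ≤ ∑ v ∈ G.neighborFinset u, (G.degree v : ℝ) * |x u| := by
          apply Finset.sum_le_sum
          intro v _
          rw [SimpleGraph.adjMatrix_mulVec_apply]
          calc |∑ w ∈ G.neighborFinset v, x w| ≤ ∑ w ∈ G.neighborFinset v, |x w| :=
                Finset.abs_sum_le_sum_abs _ _
            _ ≤ ∑ w ∈ G.neighborFinset v, |x u| :=
                Finset.sum_le_sum fun w _ => hu w (Finset.mem_univ w)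
            _ = (G.degree v : ℝ) * |x u| := by
                rw [Finset.sum_const, SimpleGraph.card_neighborFinset_eq_degree,
                  nsmul_eq_mul]
      _ = (∑ v ∈ G.neighborFinset u, (G.degree v : ℝ)) * |x u| := by
          rw [Finset.sum_mul]
  have hμ2 : μ ^ 2 ≤ ∑ v ∈ G.neighborFinset u, (G.degree v : ℝ) :=
    le_of_mul_le_mul_right key hxu
  have hcomb := key_count G htf hnb u
  have hle : μ ^ 2 ≤ (m : ℝ) - 1 := by
    rw [← hm]
    have hc : ((∑ v ∈ G.neighborFinset u, G.degree v : ℕ) : ℝ) + 1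
        ≤ (G.edgeFinset.card : ℝ) := by exact_mod_cast hcomb
    push_cast at hc
    unfold edgeCount
    linarith
  calc μ = Real.sqrt (μ ^ 2) := (Real.sqrt_sq hμ0.le).symm
    _ ≤ Real.sqrt ((m : ℝ) - 1) := Real.sqrt_le_sqrt hle
end

section
/- For m ≥ 22, the spectral radius of S^2_{(m+5)/2,2} satisfies ρ(S^2_{(m+5)/2,2}) > (1 + √(4m−7))/2. -/
open scoped Classical
open SimpleGraph Matrix

/-!
Let `c = (1 + √(4m - 7)) / 2`, so that `c² = c + 2s + 1` for `s = (m - 3) / 2`. On `pendantS s 2`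
put the positive vector `x` with value `c(c + s + 1)` on the hub carrying the two pendants,
`c(c + s)` on the other vertex of the `K₂`, `c(c + 1)` on the `s` common neighbours and
`c + s + 1` on the pendants. Then `A x = c x + e_hub`, so the Rayleigh quotient of `x` exceeds `c`,
and so does the largest eigenvalue of `A`.
-/

theorem LinearMap.IsSymmetric.exists_hasEigenvalue_inner_le {𝕜 E : Type*} [RCLike 𝕜]
    [NormedAddCommGroup E] [InnerProductSpace 𝕜 E] [FiniteDimensional 𝕜 E]
    {T : E →ₗ[𝕜] E} (hT : T.IsSymmetric) {x : E} (hx : x ≠ 0) :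
    ∃ μ : ℝ, Module.End.HasEigenvalue T μ ∧ RCLike.re (inner 𝕜 (T x) x) ≤ μ * ‖x‖ ^ 2 := by
  have : Nontrivial E := ⟨⟨x, 0, hx⟩⟩
  refine ⟨_, hT.hasEigenvalue_iSup_of_finiteDimensional, ?_⟩
  rw [← div_le_iff₀ (by positivity)]
  refine le_ciSup
    (f := fun y : {y : E // y ≠ 0} ↦ RCLike.re (inner 𝕜 (T y) (y : E)) / ‖(y : E)‖ ^ 2)
    ⟨‖LinearMap.toContinuousLinearMap T‖, ?_⟩ ⟨x, hx⟩
  rintro _ ⟨y, rfl⟩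
  exact (le_abs_self _).trans ((LinearMap.toContinuousLinearMap T).rayleighQuotient_le_norm y)

theorem Matrix.IsHermitian.exists_hasEigenvalue_dotProduct_le {n : Type*} [Fintype n]
    [DecidableEq n] {A : Matrix n n ℝ} (hA : A.IsHermitian) {x : n → ℝ} (hx : x ≠ 0) :
    ∃ μ : ℝ, Module.End.HasEigenvalue A.mulVecLin μ ∧ x ⬝ᵥ (A *ᵥ x) ≤ μ * (x ⬝ᵥ x) := by
  obtain ⟨μ, hμ, hle⟩ := (isSymmetric_toEuclideanLin_iff.mpr hA).exists_hasEigenvalue_inner_le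
    (x := WithLp.toLp 2 x) (by simpa using hx)
  refine ⟨μ, ?_, ?_⟩
  · rw [Module.End.hasEigenvalue_iff_mem_spectrum] at hμ ⊢
    simpa [← Matrix.toLin'_apply', spectrum_toLpLin] using hμ
  · have hnorm : ‖WithLp.toLp 2 x‖ ^ 2 = x ⬝ᵥ x := by
      rw [EuclideanSpace.norm_sq_eq]
      simp [dotProduct, sq]
    simpa [hnorm, EuclideanSpace.inner_eq_star_dotProduct, dotProduct_comm x] using hle

namespace SimpleGraph

variable {V : Type*} [Fintype V] (G : SimpleGraph V)

theorem le_specRad_of_hasEigenvalue {μ : ℝ}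
    (hμ : Module.End.HasEigenvalue (G.adjMatrix ℝ).mulVecLin μ) : μ ≤ specRad G :=
  le_csSup (Module.End.finite_hasEigenvalue _).bddAbove hμ

theorem lt_specRad_of_adjMatrix_mulVec_eq_add {c : ℝ} {x y : V → ℝ}
    (hxy : G.adjMatrix ℝ *ᵥ x = c • x + y) (hy : 0 < x ⬝ᵥ y) : c < specRad G := by
  have hx : x ≠ 0 := by
    rintro rfl
    simp at hy
  obtain ⟨μ, hμ, hle⟩ := (G.isHermitian_adjMatrix (R := ℝ)).exists_hasEigenvalue_dotProduct_le hx
  have hxx : 0 < x ⬝ᵥ x := by simpa using dotProduct_self_star_pos_iff.mpr hx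
  rw [hxy, dotProduct_add, dotProduct_smul, smul_eq_mul] at hle
  exact (lt_of_mul_lt_mul_right (by linarith) hxx.le).trans_le (G.le_specRad_of_hasEigenvalue hμ)

end SimpleGraph

section PendantS

variable {s t : ℕ}

def pendantVec (s t : ℕ) (a b p q : ℝ) : Fin 2 ⊕ (Fin s ⊕ Fin t) → ℝ :=
  Sum.elim ![a, b] (Sum.elim (fun _ => p) (fun _ => q))

theorem smul_pendantVec_add_pendantVec (c a b p q a' b' p' q' : ℝ) :
    c • pendantVec s t a b p q + pendantVec s t a' b' p' q' =
      pendantVec s t (c * a + a') (c * b + b') (c * p + p') (c * q + q') := by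
  funext v
  rcases v with i | k | k
  · fin_cases i <;> rfl
  all_goals rfl

theorem adjMatrix_pendantS_mulVec_pendantVec (a b p q : ℝ) :
    (pendantS s t).adjMatrix ℝ *ᵥ pendantVec s t a b p q =
      pendantVec s t (b + s * p + t * q) (a + s * p) (a + b) a := by
  funext v
  simp only [mulVec, dotProduct, adjMatrix_apply, Fintype.sum_sum_type, Fin.sum_univ_two,
    pendantVec]
  rcases v with i | k | k
  · fin_cases i <;> simp [pendantS, add_assoc]
  all_goals simp [pendantS]

theorem adjMatrix_pendantS_two_mulVec {c : ℝ} (hc : c ^ 2 = c + 2 * s + 1) :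
    (pendantS s 2).adjMatrix ℝ *ᵥ
        pendantVec s 2 (c * (c + s + 1)) (c * (c + s)) (c * (c + 1)) (c + s + 1) =
      c • pendantVec s 2 (c * (c + s + 1)) (c * (c + s)) (c * (c + 1)) (c + s + 1) +
        pendantVec s 2 1 0 0 0 := by
  rw [adjMatrix_pendantS_mulVec_pendantVec, smul_pendantVec_add_pendantVec]
  congr 1
  · push_cast
    linear_combination (-(c + 1)) * hc
  · linear_combination (-c) * hc
  · linear_combination (-c) * hc
  · ring

end PendantS

theorem stmt3 (m : ℕ) (hm : 22 ≤ m) (hodd : Odd m) :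
    (1 + Real.sqrt (4 * m - 7)) / 2 < specRad (pendantS ((m - 3) / 2) 2) := by
  set s := (m - 3) / 2
  have hms : (m : ℝ) = 2 * s + 3 := by
    obtain ⟨k, rfl⟩ := hodd
    exact_mod_cast (by omega : 2 * k + 1 = 2 * s + 3)
  set c := (1 + Real.sqrt (4 * m - 7)) / 2
  have hsqrt : Real.sqrt (4 * m - 7) ^ 2 = 4 * m - 7 :=
    Real.sq_sqrt (by linarith [show (22 : ℝ) ≤ m by exact_mod_cast hm])
  have hc : c ^ 2 = c + 2 * s + 1 := by linear_combination (1 / 4) * hsqrt + hms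
  refine (pendantS s 2).lt_specRad_of_adjMatrix_mulVec_eq_add (adjMatrix_pendantS_two_mulVec hc) ?_
  have hhub : 0 < c * (c + s + 1) := by positivity
  simpa [pendantVec, dotProduct, Fintype.sum_sum_type] using hhub
end

section
/- For m ≥ 22 and even t ≥ 4 with m ≥ t+1, ρ(S^2_{(m+5)/2,2}) > ρ(S^t_{(m+t+3)/2,2}). -/
open scoped Classical
open SimpleGraph Matrix

/-
Both graphs consist of two adjacent hubs with `s` common neighbours, one hub carrying `t` further
pendant vertices. On an eigenvector for `μ > 0` all common neighbours carry the same value, and so do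
all pendants, so `μ` is an eigenvalue exactly when it is a root of the quartic
`(μ² - s)(μ² - s - t) - (μ + s)²`. There are finitely many real eigenvalues, so `ρ` is the largest of
them, and `ρ > 1` because the quartic is negative at `√(s + t)`. Writing `t = 2d + 2`, the quartic
of `S^2` equals that of `S^t` plus `2d(1 - x - s)`, so it is negative at `ρ(S^t)`; being eventually
positive, it has a larger root.
-/

open Module End

section SpectralRadius

variable {V : Type*} [Fintype V] (G : SimpleGraph V)

lemma bddAbove_hasEigenvalue_adjMatrix :
    BddAbove {μ : ℝ | HasEigenvalue (mulVecLin (G.adjMatrix ℝ)) μ} :=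
  (finite_hasEigenvalue _).bddAbove

variable {G}

lemma le_specRad {μ : ℝ} (h : HasEigenvalue (mulVecLin (G.adjMatrix ℝ)) μ) : μ ≤ specRad G :=
  le_csSup (bddAbove_hasEigenvalue_adjMatrix G) h

lemma hasEigenvalue_specRad {μ : ℝ} (h : HasEigenvalue (mulVecLin (G.adjMatrix ℝ)) μ) :
    HasEigenvalue (mulVecLin (G.adjMatrix ℝ)) (specRad G) :=
  Set.Nonempty.csSup_mem ⟨μ, h⟩ (finite_hasEigenvalue _)

end SpectralRadius

lemma hasEigenvalue_mulVecLin_iff {n : Type*} [Fintype n] {R : Type*} [CommRing R]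
    (M : Matrix n n R) (μ : R) :
    HasEigenvalue (mulVecLin M) μ ↔ ∃ x, x ≠ 0 ∧ M *ᵥ x = μ • x := by
  simp only [hasEigenvalue_iff, Submodule.ne_bot_iff, mem_eigenspace_iff, mulVecLin_apply]
  exact exists_congr fun x => and_comm

section Pendant

variable {a b : ℕ}

@[simp] lemma pendantS_adj_inl_inl (i j : Fin 2) :
    (pendantS a b).Adj (.inl i) (.inl j) ↔ i ≠ j := by
  simp [pendantS]

@[simp] lemma pendantS_adj_inl_common (i : Fin 2) (j : Fin a) :
    (pendantS a b).Adj (.inl i) (.inr (.inl j)) := by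
  simp [pendantS]

@[simp] lemma pendantS_adj_inl_pendant (i : Fin 2) (j : Fin b) :
    (pendantS a b).Adj (.inl i) (.inr (.inr j)) ↔ i = 0 := by
  simp [pendantS]

@[simp] lemma pendantS_not_adj_inr_inr (x y : Fin a ⊕ Fin b) :
    ¬ (pendantS a b).Adj (.inr x) (.inr y) := by
  rcases x with x | x <;> rcases y with y | y <;> simp [pendantS]

lemma pendantS_mulVec_inl_zero (x : Fin 2 ⊕ (Fin a ⊕ Fin b) → ℝ) :
    ((pendantS a b).adjMatrix ℝ *ᵥ x) (.inl 0) =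
      x (.inl 1) + ∑ j, x (.inr (.inl j)) + ∑ j, x (.inr (.inr j)) := by
  simp [mulVec, dotProduct, Fintype.sum_sum_type, add_assoc]

lemma pendantS_mulVec_inl_one (x : Fin 2 ⊕ (Fin a ⊕ Fin b) → ℝ) :
    ((pendantS a b).adjMatrix ℝ *ᵥ x) (.inl 1) = x (.inl 0) + ∑ j, x (.inr (.inl j)) := by
  simp [mulVec, dotProduct, Fintype.sum_sum_type]

lemma pendantS_mulVec_common (x : Fin 2 ⊕ (Fin a ⊕ Fin b) → ℝ) (j : Fin a) :
    ((pendantS a b).adjMatrix ℝ *ᵥ x) (.inr (.inl j)) = x (.inl 0) + x (.inl 1) := by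
  simp [mulVec, dotProduct, Fintype.sum_sum_type, (pendantS a b).adj_comm (.inr _) (.inl _)]

lemma pendantS_mulVec_pendant (x : Fin 2 ⊕ (Fin a ⊕ Fin b) → ℝ) (j : Fin b) :
    ((pendantS a b).adjMatrix ℝ *ᵥ x) (.inr (.inr j)) = x (.inl 0) := by
  simp [mulVec, dotProduct, Fintype.sum_sum_type, (pendantS a b).adj_comm (.inr _) (.inl _)]

lemma pendantS_mulVec_eq_smul_iff (x : Fin 2 ⊕ (Fin a ⊕ Fin b) → ℝ) (μ : ℝ) :
    (pendantS a b).adjMatrix ℝ *ᵥ x = μ • x ↔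
      x (.inl 1) + ∑ j, x (.inr (.inl j)) + ∑ j, x (.inr (.inr j)) = μ * x (.inl 0) ∧
      x (.inl 0) + ∑ j, x (.inr (.inl j)) = μ * x (.inl 1) ∧
      (∀ j, x (.inl 0) + x (.inl 1) = μ * x (.inr (.inl j))) ∧
      ∀ j, x (.inl 0) = μ * x (.inr (.inr j)) := by
  simp only [funext_iff, Sum.forall, Fin.forall_fin_two, pendantS_mulVec_inl_zero,
    pendantS_mulVec_inl_one, pendantS_mulVec_common, pendantS_mulVec_pendant, Pi.smul_apply,
    smul_eq_mul, and_assoc]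

def pendantQuartic (a b x : ℝ) : ℝ := (x ^ 2 - a) * (x ^ 2 - a - b) - (x + a) ^ 2

lemma pendantQuartic_eq_zero_of_mulVec_eq_smul {μ : ℝ} (hμ : 0 < μ)
    {x : Fin 2 ⊕ (Fin a ⊕ Fin b) → ℝ} (hx : x ≠ 0)
    (hxμ : (pendantS a b).adjMatrix ℝ *ᵥ x = μ • x) :
    pendantQuartic a b μ = 0 := by
  have hμa : μ + a ≠ 0 := by positivity
  obtain ⟨h0, h1, hc, hp⟩ := (pendantS_mulVec_eq_smul_iff x μ).1 hxμ
  set P := x (.inl 0)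
  set Q := x (.inl 1)
  have hR : μ * ∑ j, x (.inr (.inl j)) = a * (P + Q) := by simp [Finset.mul_sum, ← hc, mul_add]
  have hW : μ * ∑ j, x (.inr (.inr j)) = b * P := by simp [Finset.mul_sum, ← hp]
  have E1 : Q * (μ ^ 2 - a) = P * (μ + a) := by linear_combination hR - μ * h1
  have E2 : P * (μ ^ 2 - a - b) = Q * (μ + a) := by linear_combination hR + hW - μ * h0
  have hPQ : P * Q ≠ 0 := by
    intro h
    have hP : P = 0 ∧ Q = 0 := by
      rcases mul_eq_zero.1 h with hP | hQ
      · exact ⟨hP, by simpa [hP, hμa] using E2⟩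
      · exact ⟨by simpa [hQ, hμa] using E1, hQ⟩
    refine hx (funext ?_)
    rintro (i | j | j)
    · fin_cases i
      exacts [hP.1, hP.2]
    · simpa [hP, hμ.ne'] using (hc j).symm
    · simpa [hP, hμ.ne'] using (hp j).symm
  have : pendantQuartic a b μ * (P * Q) = 0 := by
    unfold pendantQuartic
    linear_combination (P * (μ ^ 2 - a - b)) * E1 + (P * (μ + a)) * E2
  exact (mul_eq_zero.1 this).resolve_right hPQ

def pendantSEigenvector (a b : ℕ) (μ : ℝ) : Fin 2 ⊕ (Fin a ⊕ Fin b) → ℝ :=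
  Sum.elim ![μ * (μ ^ 2 - a), μ * (μ + a)] (Sum.elim (fun _ => μ ^ 2 + μ) fun _ => μ ^ 2 - a)

lemma pendantS_mulVec_eigenvector {μ : ℝ} (h : pendantQuartic a b μ = 0) :
    (pendantS a b).adjMatrix ℝ *ᵥ pendantSEigenvector a b μ = μ • pendantSEigenvector a b μ := by
  unfold pendantQuartic at h
  rw [pendantS_mulVec_eq_smul_iff]
  refine ⟨?_, ?_, fun _ => ?_, fun _ => ?_⟩ <;> simp [pendantSEigenvector]
  · linear_combination -h
  all_goals ring

theorem pendantS_hasEigenvalue_iff {μ : ℝ} (hμ : 0 < μ) :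
    HasEigenvalue (mulVecLin ((pendantS a b).adjMatrix ℝ)) μ ↔ pendantQuartic a b μ = 0 := by
  rw [hasEigenvalue_mulVecLin_iff]
  refine ⟨fun ⟨x, hx, hxμ⟩ => pendantQuartic_eq_zero_of_mulVec_eq_smul hμ hx hxμ, fun h => ?_⟩
  have hμa : μ ^ 2 - a ≠ 0 := by
    intro h'
    rw [pendantQuartic, h', zero_mul, zero_sub, neg_eq_zero, sq_eq_zero_iff] at h
    exact (by positivity : μ + a ≠ 0) h
  refine ⟨_, fun h0 => ?_, pendantS_mulVec_eigenvector h⟩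
  simpa [pendantSEigenvector, hμ.ne', hμa] using congrFun h0 (.inl 0)

end Pendant

lemma pendantQuartic_shift (s d x : ℝ) :
    pendantQuartic (s + d) 2 x = pendantQuartic s (2 * d + 2) x + 2 * d * (1 - x - s) := by
  unfold pendantQuartic
  ring

lemma exists_gt_pendantQuartic_eq_zero {a b x : ℝ} (ha : 0 ≤ a) (hb : 0 ≤ b) (hx : 0 ≤ x)
    (h : pendantQuartic a b x < 0) : ∃ z, x < z ∧ pendantQuartic a b z = 0 := by
  set X := x + a + b + 3
  have hX : 0 < pendantQuartic a b X := by
    have h1 : 2 * X + 3 ≤ X ^ 2 - a - b := by nlinarith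
    have h2 : (X + a) ^ 2 < (2 * X + 3) ^ 2 := by nlinarith
    unfold pendantQuartic
    nlinarith
  have hcont : ContinuousOn (pendantQuartic a b) (Set.Icc x X) := by
    unfold pendantQuartic
    fun_prop
  obtain ⟨z, hz, hz0⟩ := intermediate_value_Ioo (by linarith) hcont ⟨h, hX⟩
  exact ⟨z, hz.1, hz0⟩

lemma exists_hasEigenvalue_pendantS_gt_sqrt {a b : ℕ} (hab : 0 < a + b) :
    ∃ z, √(a + b : ℝ) < z ∧ HasEigenvalue (mulVecLin ((pendantS a b).adjMatrix ℝ)) z := by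
  have hab' : (0 : ℝ) < a + b := by exact_mod_cast hab
  have hsq := Real.sq_sqrt hab'.le
  have hneg : pendantQuartic a b √(a + b : ℝ) < 0 := by
    unfold pendantQuartic
    rw [hsq]
    nlinarith [Real.sqrt_pos.2 hab']
  obtain ⟨z, hz, hz0⟩ :=
    exists_gt_pendantQuartic_eq_zero (Nat.cast_nonneg a) (Nat.cast_nonneg b) (Real.sqrt_nonneg _)
      hneg
  exact ⟨z, hz, (pendantS_hasEigenvalue_iff ((Real.sqrt_nonneg _).trans_lt hz)).2 hz0⟩

theorem specRad_pendantS_lt (s d : ℕ) (hd : 1 ≤ d) :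
    specRad (pendantS s (2 * d + 2)) < specRad (pendantS (s + d) 2) := by
  set ρ := specRad (pendantS s (2 * d + 2))
  obtain ⟨z₀, hz₀, hz₀ρ⟩ :=
    exists_hasEigenvalue_pendantS_gt_sqrt (a := s) (b := 2 * d + 2) (by omega)
  have hρ : 1 < ρ := calc
    1 ≤ √(s + (2 * d + 2 : ℕ) : ℝ) := Real.one_le_sqrt.2 (by push_cast; linarith)
    _ < z₀ := hz₀
    _ ≤ ρ := le_specRad hz₀ρ
  have hroot : pendantQuartic s (2 * d + 2 : ℕ) ρ = 0 :=
    (pendantS_hasEigenvalue_iff (by linarith)).1 (hasEigenvalue_specRad hz₀ρ)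
  have hneg : pendantQuartic (s + d : ℕ) (2 : ℕ) ρ < 0 := by
    push_cast at hroot ⊢
    rw [pendantQuartic_shift, hroot]
    nlinarith [(Nat.one_le_cast (α := ℝ)).2 hd, (Nat.cast_nonneg s : (0 : ℝ) ≤ s)]
  obtain ⟨z, hρz, hz⟩ :=
    exists_gt_pendantQuartic_eq_zero (Nat.cast_nonneg _) (Nat.cast_nonneg _) (by linarith) hneg
  exact hρz.trans_le (le_specRad ((pendantS_hasEigenvalue_iff (by linarith)).2 hz))

theorem stmt4_general (m t : ℕ) (ht : Even t) (ht4 : 4 ≤ t)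
    (hmt : t + 1 ≤ m) :
    specRad (pendantS ((m - t - 1) / 2) t) < specRad (pendantS ((m - 3) / 2) 2) := by
  obtain ⟨d, rfl⟩ : ∃ d, t = 2 * d + 2 := ⟨t / 2 - 1, by obtain ⟨k, rfl⟩ := ht; omega⟩
  rw [show (m - 3) / 2 = (m - (2 * d + 2) - 1) / 2 + d by omega]
  exact specRad_pendantS_lt _ d (by omega)

theorem stmt4 (m t : ℕ) (hm : 22 ≤ m) (hodd : Odd m) (ht : Even t) (ht4 : 4 ≤ t)
    (hmt : t + 1 ≤ m) :
    specRad (pendantS ((m - t - 1) / 2) t) < specRad (pendantS ((m - 3) / 2) 2) :=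
  stmt4_general m t ht ht4 hmt
end

section
/- If G has the maximum spectral radius among all gem-free graphs with m ≥ 7 edges and no isolated vertices, excluding S_{(m+3)/2,2}, then G is connected. -/
open scoped Classical
open SimpleGraph Matrix

/-!
Let `x` be an eigenvector of `ρ(G)` and `u` a vertex with `x u ≠ 0`. If `G` were disconnected,
some of its `m` edges would lie outside the component `C` of `u`; replace them by the same number
`k ≥ 1` of pendant edges at `u` attached to `C`. The resulting graph is again in the family: it has
`m` edges and no isolated vertices, it is gem-free because every vertex of the gem has two
neighbours while a pendant vertex has one, and for the same reason it is not the book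
`S_{(m+3)/2,2}`. The vector `x|_C`, extended by zeros, has Rayleigh quotient `ρ(G)` there but is
not an eigenvector (its image at a pendant vertex is `x u ≠ 0`), so the new graph has spectral
radius strictly larger than `ρ(G)`, contradicting maximality.
-/

open Module.End Finset

lemma ContinuousLinearMap.bddAbove_rayleighQuotient_ne_zero {E : Type*}
    [NormedAddCommGroup E] [InnerProductSpace ℝ E] (T : E →L[ℝ] E) :
    BddAbove (Set.range fun x : {x : E // x ≠ 0} ↦ T.rayleighQuotient x) :=
  ⟨‖T‖, by rintro _ ⟨x, rfl⟩; exact (abs_le.mp (T.rayleighQuotient_le_norm x)).2⟩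

namespace Matrix

variable {n : Type*} [Fintype n]

/-- `sSup` of the real eigenvalues, hence the junk value `0` when there are none. -/
noncomputable def maxEigenvalue (A : Matrix n n ℝ) : ℝ :=
  sSup {μ : ℝ | HasEigenvalue A.mulVecLin μ}

lemma hasEigenvalue_mulVecLin_iff_mem_spectrum {A : Matrix n n ℝ} {μ : ℝ} :
    HasEigenvalue A.mulVecLin μ ↔ μ ∈ spectrum ℝ A := by
  rw [hasEigenvalue_iff_mem_spectrum, ← spectrum_toLin']
  rfl

lemma hasEigenvalue_toEuclideanCLM_iff {A : Matrix n n ℝ} {μ : ℝ} :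
    HasEigenvalue (toEuclideanCLM (𝕜 := ℝ) A : EuclideanSpace ℝ n →ₗ[ℝ] _) μ ↔
      HasEigenvalue A.mulVecLin μ := by
  rw [hasEigenvalue_mulVecLin_iff_mem_spectrum, hasEigenvalue_iff_mem_spectrum,
    coe_toEuclideanCLM_eq_toEuclideanLin, ← spectrum_toLpLin 2]

lemma maxEigenvalue_reindex {m : Type*} [Fintype m] (A : Matrix n n ℝ) (e : n ≃ m) :
    (reindex e e A).maxEigenvalue = A.maxEigenvalue := by
  simp only [maxEigenvalue, hasEigenvalue_mulVecLin_iff_mem_spectrum,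
    mem_spectrum_iff_isRoot_charpoly, charpoly_reindex]

lemma reApplyInnerSelf_toEuclideanCLM (A : Matrix n n ℝ) (x : n → ℝ) :
    (toEuclideanCLM (𝕜 := ℝ) A).reApplyInnerSelf (WithLp.toLp 2 x) = x ⬝ᵥ A *ᵥ x := by
  rw [ContinuousLinearMap.reApplyInnerSelf_apply, RCLike.re_to_real, real_inner_comm,
    inner_toEuclideanCLM]

lemma norm_toLp_sq (x : n → ℝ) : ‖WithLp.toLp 2 x‖ ^ 2 = x ⬝ᵥ x := by
  rw [← real_inner_self_eq_norm_sq, EuclideanSpace.inner_toLp_toLp, star_trivial]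

variable {A : Matrix n n ℝ}

lemma IsHermitian.isSelfAdjoint_toEuclideanCLM (hA : A.IsHermitian) :
    IsSelfAdjoint (toEuclideanCLM (𝕜 := ℝ) A) :=
  (isHermitian_iff_isSelfAdjoint.mp hA).map _

lemma IsHermitian.hasEigenvalue_iSup_rayleighQuotient [Nonempty n] (hA : A.IsHermitian) :
    HasEigenvalue A.mulVecLin
      (⨆ x : {x : EuclideanSpace ℝ n // x ≠ 0}, (toEuclideanCLM (𝕜 := ℝ) A).rayleighQuotient x) :=
  hasEigenvalue_toEuclideanCLM_iff.mp
    hA.isSelfAdjoint_toEuclideanCLM.isSymmetric.hasEigenvalue_iSup_of_finiteDimensional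

lemma IsHermitian.maxEigenvalue_eq_iSup_rayleighQuotient [Nonempty n] (hA : A.IsHermitian) :
    A.maxEigenvalue =
      ⨆ x : {x : EuclideanSpace ℝ n // x ≠ 0}, (toEuclideanCLM (𝕜 := ℝ) A).rayleighQuotient x := by
  set T := toEuclideanCLM (𝕜 := ℝ) A
  refine IsGreatest.csSup_eq ⟨hA.hasEigenvalue_iSup_rayleighQuotient, fun μ hμ ↦ ?_⟩
  obtain ⟨v, hv⟩ := (hasEigenvalue_toEuclideanCLM_iff.mpr hμ).exists_hasEigenvector
  have hTv : T v = μ • v := hv.apply_eq_smul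
  have hv0 : v ≠ 0 := hv.2
  calc μ = T.rayleighQuotient v := by
        rw [ContinuousLinearMap.rayleighQuotient, ContinuousLinearMap.reApplyInnerSelf_apply, hTv,
          real_inner_smul_left, real_inner_self_eq_norm_sq, RCLike.re_to_real]
        field_simp [norm_ne_zero_iff.mpr hv0]
    _ ≤ _ := le_ciSup T.bddAbove_rayleighQuotient_ne_zero ⟨v, hv0⟩

lemma IsHermitian.hasEigenvalue_maxEigenvalue [Nonempty n] (hA : A.IsHermitian) :
    HasEigenvalue A.mulVecLin A.maxEigenvalue :=
  hA.maxEigenvalue_eq_iSup_rayleighQuotient ▸ hA.hasEigenvalue_iSup_rayleighQuotient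

lemma dotProduct_self_pos_of_ne_zero {x : n → ℝ} (hx : x ≠ 0) : 0 < x ⬝ᵥ x := by
  simpa using dotProduct_star_self_pos_iff.mpr hx

lemma IsHermitian.dotProduct_mulVec_le (hA : A.IsHermitian) (x : n → ℝ) :
    x ⬝ᵥ A *ᵥ x ≤ A.maxEigenvalue * (x ⬝ᵥ x) := by
  rcases eq_or_ne x 0 with rfl | hx
  · simp
  have : Nonempty n := (Function.ne_iff.mp hx).nonempty
  have hle := le_ciSup (toEuclideanCLM (𝕜 := ℝ) A).bddAbove_rayleighQuotient_ne_zero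
    ⟨WithLp.toLp 2 x, by simpa using hx⟩
  rwa [← hA.maxEigenvalue_eq_iSup_rayleighQuotient, ContinuousLinearMap.rayleighQuotient,
    reApplyInnerSelf_toEuclideanCLM, norm_toLp_sq,
    div_le_iff₀ (dotProduct_self_pos_of_ne_zero hx)] at hle

lemma IsHermitian.mulVec_eq_of_dotProduct_mulVec_eq (hA : A.IsHermitian) {x : n → ℝ} (hx : x ≠ 0)
    (h : x ⬝ᵥ A *ᵥ x = A.maxEigenvalue * (x ⬝ᵥ x)) : A *ᵥ x = A.maxEigenvalue • x := by
  have : Nonempty n := (Function.ne_iff.mp hx).nonempty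
  set T := toEuclideanCLM (𝕜 := ℝ) A
  have hmax : IsMaxOn T.reApplyInnerSelf (Metric.sphere 0 ‖WithLp.toLp 2 x‖) (WithLp.toLp 2 x) := by
    rintro ⟨z⟩ hz
    rw [mem_sphere_zero_iff_norm] at hz
    change T.reApplyInnerSelf _ ≤ T.reApplyInnerSelf _
    rw [reApplyInnerSelf_toEuclideanCLM, reApplyInnerSelf_toEuclideanCLM, h, ← norm_toLp_sq, ← hz,
      norm_toLp_sq]
    exact hA.dotProduct_mulVec_le z
  have hev := hA.isSelfAdjoint_toEuclideanCLM.hasEigenvector_of_isMaxOn (by simpa using hx) hmax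
  rw [← hA.maxEigenvalue_eq_iSup_rayleighQuotient] at hev
  simpa using congrArg WithLp.ofLp hev.apply_eq_smul

lemma IsHermitian.lt_maxEigenvalue (hA : A.IsHermitian) {x : n → ℝ} {μ : ℝ}
    (h : x ⬝ᵥ A *ᵥ x = μ * (x ⬝ᵥ x)) (hne : A *ᵥ x ≠ μ • x) : μ < A.maxEigenvalue := by
  have hx : x ≠ 0 := by rintro rfl; simp at hne
  have hle : μ ≤ A.maxEigenvalue := le_of_mul_le_mul_right (h ▸ hA.dotProduct_mulVec_le x)
    (dotProduct_self_pos_of_ne_zero hx)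
  refine hle.lt_of_ne fun heq ↦ hne ?_
  rw [heq] at h ⊢
  exact hA.mulVec_eq_of_dotProduct_mulVec_eq hx h

end Matrix

namespace SimpleGraph

variable {V : Type*}

def addPendants (G : SimpleGraph V) (u : V) (k : ℕ) : SimpleGraph (V ⊕ Fin k) where
  Adj
    | .inl a, .inl b => G.Adj a b
    | .inl a, .inr _ => a = u
    | .inr _, .inl b => b = u
    | .inr _, .inr _ => False
  symm := ⟨by rintro (a | i) (b | j) h <;> first | exact G.adj_symm h | exact h⟩
  loopless := ⟨by rintro (a | i) h <;> first | exact G.irrefl h | exact h⟩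

variable {G : SimpleGraph V} {u : V} {k : ℕ}

@[simp] lemma addPendants_adj_inl_inl {a b : V} :
    (G.addPendants u k).Adj (.inl a) (.inl b) ↔ G.Adj a b := Iff.rfl

@[simp] lemma addPendants_adj_inl_inr {a : V} {i : Fin k} :
    (G.addPendants u k).Adj (.inl a) (.inr i) ↔ a = u := Iff.rfl

@[simp] lemma addPendants_adj_inr_inl {a : V} {i : Fin k} :
    (G.addPendants u k).Adj (.inr i) (.inl a) ↔ a = u := Iff.rfl

@[simp] lemma addPendants_not_adj_inr_inr {i j : Fin k} :
    ¬ (G.addPendants u k).Adj (.inr i) (.inr j) := id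

lemma addPendants_neighborSet_inr (i : Fin k) :
    (G.addPendants u k).neighborSet (.inr i) = {.inl u} := by
  ext (b | j) <;> simp [eq_comm]

lemma isContained_of_isContained_addPendants {α : Type*} {F : SimpleGraph α}
    (hF : ∀ a, (F.neighborSet a).Nontrivial) (h : F ⊑ G.addPendants u k) : F ⊑ G := by
  obtain ⟨f⟩ := h
  have hleft (a : α) : ∃ v, f a = .inl v := by
    obtain ⟨b, hb, c, hc, hbc⟩ := hF a
    rcases hfa : f a with v | i
    · exact ⟨v, rfl⟩
    have hb' := f.toHom.map_adj hb
    have hc' := f.toHom.map_adj hc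
    simp only [Copy.coe_toHom, hfa, ← mem_neighborSet, addPendants_neighborSet_inr,
      Set.mem_singleton_iff] at hb' hc'
    exact absurd (f.injective (hb'.trans hc'.symm)) hbc
  choose g hg using hleft
  refine ⟨⟨⟨g, fun {a b} hab ↦ ?_⟩, fun a b hab ↦ f.injective ?_⟩⟩
  · simpa [hg] using f.toHom.map_adj hab
  · simpa [hg] using hab

lemma Iso.isEmpty_of_neighborSet_subsingleton {W : Type*} {G' : SimpleGraph W}
    (hG' : ∀ w, (G'.neighborSet w).Nontrivial) {v : V} (hv : (G.neighborSet v).Subsingleton) :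
    IsEmpty (G ≃g G') :=
  ⟨fun e ↦ (hG' (e v)).not_subsingleton (e.image_neighborSet (v := v) ▸ hv.image e)⟩

variable [Fintype V]

lemma edgeFinset_addPendants :
    (G.addPendants u k).edgeFinset = G.edgeFinset.map Function.Embedding.inl.sym2Map ∪
      univ.image fun i ↦ s(.inl u, .inr i) := by
  ext e
  induction e using Sym2.ind with
  | _ p q =>
    rcases p with a | i <;> rcases q with b | j <;> simp [Sym2.exists, eq_comm]
    exact ⟨fun h ↦ ⟨a, b, h, .inl ⟨rfl, rfl⟩⟩,
      by rintro ⟨x, y, h, ⟨rfl, rfl⟩ | ⟨rfl, rfl⟩⟩ <;> simp [h, h.symm]⟩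

lemma card_edgeFinset_addPendants :
    #(G.addPendants u k).edgeFinset = #G.edgeFinset + k := by
  rw [edgeFinset_addPendants, card_union_of_disjoint, card_map,
    card_image_of_injective _ fun i j h ↦ by simpa using h, card_univ, Fintype.card_fin]
  simp [Finset.disjoint_left, Sym2.forall]

lemma card_edgeFinset_induce_lt {s : Set V} {w w' : V} (hw : w ∉ s) (h : G.Adj w w') :
    #(G.induce s).edgeFinset < #G.edgeFinset := by
  rw [← card_map, map_edgeFinset_induce]
  exact card_lt_card ((ssubset_iff_of_subset inter_subset_left).mpr
    ⟨s(w, w'), mem_edgeFinset.mpr h, by simp [hw]⟩)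

lemma adjMatrix_induce_mulVec_eq_smul {s : Set V} (hs : ∀ a ∈ s, ∀ b, G.Adj a b → b ∈ s)
    {x : V → ℝ} {μ : ℝ} (hx : G.adjMatrix ℝ *ᵥ x = μ • x) :
    (G.induce s).adjMatrix ℝ *ᵥ (fun b ↦ x b) = μ • fun b : s ↦ x b := by
  ext a
  have hout : ∑ b : {b // b ∉ s}, (if G.Adj a b then (1 : ℝ) else 0) * x b = 0 :=
    Finset.sum_eq_zero fun b _ ↦ by rw [if_neg fun h ↦ b.2 (hs a a.2 b h), zero_mul]
  have := congrFun hx a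
  simp only [mulVec, dotProduct, adjMatrix_apply, Pi.smul_apply] at this ⊢
  rw [← this, ← Fintype.sum_subtype_add_sum_subtype (· ∈ s), hout, add_zero]
  rfl

lemma adjMatrix_addPendants_mulVec_inl (x : V → ℝ) (a : V) :
    ((G.addPendants u k).adjMatrix ℝ *ᵥ Sum.elim x 0) (.inl a) = (G.adjMatrix ℝ *ᵥ x) a := by
  simp [mulVec, dotProduct, adjMatrix_apply, Fintype.sum_sum_type]

lemma adjMatrix_addPendants_mulVec_inr (x : V → ℝ) (i : Fin k) :
    ((G.addPendants u k).adjMatrix ℝ *ᵥ Sum.elim x 0) (.inr i) = x u := by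
  simp [mulVec, dotProduct, adjMatrix_apply, Fintype.sum_sum_type]

lemma lt_specRad_addPendants {x : V → ℝ} {μ : ℝ}
    (hx : G.adjMatrix ℝ *ᵥ x = μ • x) (hu : x u ≠ 0) (hk : 0 < k) :
    μ < specRad (G.addPendants u k) := by
  refine (isHermitian_adjMatrix _ _).lt_maxEigenvalue (x := Sum.elim x 0) ?_ fun h ↦ hu ?_
  · simp only [dotProduct, Fintype.sum_sum_type, adjMatrix_addPendants_mulVec_inl, hx]
    simp [Finset.mul_sum, mul_left_comm]
  · have := congrFun h (.inr ⟨0, hk⟩)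
    rwa [adjMatrix_addPendants_mulVec_inr, Pi.smul_apply, Sum.elim_inr, Pi.zero_apply,
      smul_zero] at this

end SimpleGraph

open SimpleGraph

lemma containsCopy_iff_isContained {α β : Type*} {H : SimpleGraph α} {G : SimpleGraph β} :
    ContainsCopy H G ↔ H ⊑ G :=
  isContained_iff_exists_le_comap.symm

lemma gem_neighborSet_nontrivial (a : Fin 5) : (gem.neighborSet a).Nontrivial := by
  have : ∀ a : Fin 5, ∃ b c, b ≠ c ∧ gem.Adj a b ∧ gem.Adj a c := by
    simp only [gem, fromRel_adj]
    decide
  obtain ⟨b, c, hbc, hb, hc⟩ := this a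
  exact ⟨b, hb, c, hc, hbc⟩

lemma bookS_neighborSet_nontrivial {k : ℕ} (hk : 0 < k) (v : Fin 2 ⊕ Fin k) :
    ((bookS k).neighborSet v).Nontrivial := by
  rcases v with i | i
  · refine ⟨.inl (1 - i), ?_, .inr ⟨0, hk⟩, ?_, by simp⟩ <;> simp [bookS]
    omega
  · exact ⟨.inl 0, by simp [bookS], .inl 1, by simp [bookS], by simp⟩

lemma specRad_congr {V W : Type*} [Fintype V] [Fintype W] {G : SimpleGraph V}
    {G' : SimpleGraph W} (e : G ≃g G') : specRad G = specRad G' := by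
  change (G.adjMatrix ℝ).maxEigenvalue = (G'.adjMatrix ℝ).maxEigenvalue
  rw [← e.reindex_adjMatrix ℝ, Matrix.maxEigenvalue_reindex]

lemma InFamily.of_iso {m : ℕ} {V W : Type*} [Fintype V] [Fintype W] {G : SimpleGraph V}
    {G' : SimpleGraph W} (h : InFamily m G) (e : G ≃g G') : InFamily m G' := by
  obtain ⟨hgem, hedge, hdeg, hbook⟩ := h
  refine ⟨?_, ?_, fun v ↦ ?_, fun ⟨e'⟩ ↦ hbook ⟨e.trans e'⟩⟩
  · rwa [containsCopy_iff_isContained, ← isContained_congr_right e, ← containsCopy_iff_isContained]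
  · rwa [edgeCount, ← e.card_edgeFinset_eq]
  · obtain ⟨w, hw⟩ := hdeg (e.symm v)
    exact ⟨e w, by simpa using e.map_adj_iff.mpr hw⟩

lemma MaxInFamily.specRad_le {m : ℕ} {V W : Type*} [Fintype V] [Fintype W] {G : SimpleGraph V}
    {H : SimpleGraph W} (hG : MaxInFamily m G) (hH : InFamily m H) : specRad H ≤ specRad G := by
  let e := Iso.map (Fintype.equivFin W) H
  exact specRad_congr e ▸ hG.2 _ _ (hH.of_iso e)

lemma inFamily_addPendants {V : Type*} [Fintype V] {G : SimpleGraph V} (hgem : ¬ gem ⊑ G)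
    (hdeg : ∀ v, ∃ w, G.Adj v w) (u : V) {k : ℕ} (hk : 0 < k) (hm : 3 ≤ edgeCount G + k) :
    InFamily (edgeCount G + k) (G.addPendants u k) := by
  refine ⟨?_, card_edgeFinset_addPendants, ?_, ?_⟩
  · rw [containsCopy_iff_isContained]
    exact fun h ↦ hgem (isContained_of_isContained_addPendants gem_neighborSet_nontrivial h)
  · rintro (v | i)
    · obtain ⟨w, hw⟩ := hdeg v
      exact ⟨.inl w, hw⟩
    · exact ⟨.inl u, rfl⟩
  · rw [not_nonempty_iff]
    refine Iso.isEmpty_of_neighborSet_subsingleton (bookS_neighborSet_nontrivial (by omega))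
      (v := .inr ⟨0, hk⟩) ?_
    rw [addPendants_neighborSet_inr]
    exact Set.subsingleton_singleton

theorem stmt5 {V : Type*} [Fintype V] (G : SimpleGraph V) (m : ℕ) (hm : 7 ≤ m)
    (hmax : MaxInFamily m G) : G.Connected := by
  obtain ⟨hgem, hedge, hdeg, -⟩ := hmax.1
  rw [containsCopy_iff_isContained] at hgem
  obtain ⟨e, -⟩ := card_pos.mp (show 0 < #G.edgeFinset by rw [← edgeCount, hedge]; omega)
  have : Nonempty V := ⟨e.out.1⟩
  obtain ⟨x, hx⟩ := (G.isHermitian_adjMatrix ℝ).hasEigenvalue_maxEigenvalue.exists_hasEigenvector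
  obtain ⟨u, hu⟩ := Function.ne_iff.mp hx.2
  rw [connected_iff_exists_forall_reachable]
  refine ⟨u, fun w ↦ by_contra fun hw ↦ ?_⟩
  obtain ⟨s, hus, hws, hs⟩ : ∃ s : Set V, u ∈ s ∧ w ∉ s ∧ ∀ a ∈ s, ∀ b, G.Adj a b → b ∈ s :=
    ⟨{v | G.Reachable u v}, .rfl, hw, fun a ha b hab ↦ ha.trans hab.reachable⟩
  obtain ⟨w', hww'⟩ := hdeg w
  have hlt : edgeCount (G.induce s) < m := by
    rw [← hedge]
    exact card_edgeFinset_induce_lt hws hww'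
  have hfam := inFamily_addPendants (fun h ↦ hgem (h.trans ⟨Copy.induce G s⟩))
    (fun v ↦ let ⟨w, hw⟩ := hdeg v; ⟨⟨w, hs v v.2 w hw⟩, hw⟩) ⟨u, hus⟩
    (k := m - edgeCount (G.induce s)) (by omega) (by omega)
  rw [Nat.add_sub_cancel' hlt.le] at hfam
  exact (hmax.specRad_le hfam).not_gt <|
    lt_specRad_addPendants (adjMatrix_induce_mulVec_eq_smul hs hx.apply_eq_smul) hu (by omega)
end

section
/- If G is gem-free and u is any vertex of G, then every connected component of the induced subgraph G[N(u)] is either a triangle K_3 or a star K_{1,r} for some integer r ≥ 0. -/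
open scoped Classical
open SimpleGraph Matrix

set_option maxHeartbeats 1000000 in
lemma gemCopy {V : Type*} (G : SimpleGraph V) {u a b c d : V}
    (gab : G.Adj a b) (gbc : G.Adj b c) (gcd : G.Adj c d)
    (gua : G.Adj u a) (gub : G.Adj u b) (guc : G.Adj u c) (gud : G.Adj u d)
    (nac : a ≠ c) (nad : a ≠ d) (nbd : b ≠ d) : ContainsCopy gem G := by
  refine ⟨⟨![a, b, c, d, u], ?_⟩, ?_⟩
  · intro i j hij
    fin_cases i <;> fin_cases j <;> simp_all <;>
      first
        | rfl
        | exact absurd hij gab.ne | exact absurd hij gab.ne'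
        | exact absurd hij gbc.ne | exact absurd hij gbc.ne'
        | exact absurd hij gcd.ne | exact absurd hij gcd.ne'
        | exact absurd hij nac | exact absurd hij nac.symm
        | exact absurd hij nad | exact absurd hij nad.symm
        | exact absurd hij nbd | exact absurd hij nbd.symm
        | exact absurd hij gua.ne' | exact absurd hij gua.ne
        | exact absurd hij gub.ne' | exact absurd hij gub.ne
        | exact absurd hij guc.ne' | exact absurd hij guc.ne
        | exact absurd hij gud.ne' | exact absurd hij gud.ne
  · intro i j hij
    fin_cases i <;> fin_cases j <;>
      simp only [gem, SimpleGraph.fromRel_adj] at hij <;>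
      simp_all <;>
      first
        | exact gab | exact gab.symm | exact gbc | exact gbc.symm
        | exact gcd | exact gcd.symm
        | exact gua.symm | exact gub.symm | exact guc.symm | exact gud.symm
        | exact gua | exact gub | exact guc | exact gud

lemma reachInd {W : Type*} {H : SimpleGraph W} {S : Set W}
    (hS : ∀ x y, H.Adj x y → x ∈ S → y ∈ S) {P : W → Prop}
    (hstep : ∀ x y, x ∈ S → y ∈ S → H.Adj x y → P x → P y) :
    ∀ {a v : W}, H.Walk a v → a ∈ S → P a → P v := by
  intro a v w
  induction w with
  | nil => exact fun _ h => h
  | cons h p ih =>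
    intro haS hPa
    exact ih (hS _ _ h haS) (hstep _ _ haS (hS _ _ h haS) h hPa)

lemma starChar {W : Type*} {H : SimpleGraph W} {S : Set W} {a c : W}
    (ha : a ∈ S) (hac : H.Adj a c)
    (hnt : ∀ x y z, x ∈ S → H.Adj x y → H.Adj y z → H.Adj x z → False)
    (hP : ∀ v ∈ S, v = a ∨ v = c ∨ H.Adj a v ∨ H.Adj c v)
    (hcA : ∀ w ∈ S, H.Adj c w → w = a) :
    ∀ p q, p ∈ S → q ∈ S → (H.Adj p q ↔ p ≠ q ∧ (p = a ∨ q = a)) := by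
  have key : ∀ v ∈ S, v ≠ a → H.Adj a v := by
    intro v hv hva
    rcases hP v hv with h | h | h | h
    · exact absurd h hva
    · exact h ▸ hac
    · exact h
    · exact absurd (hcA v hv h) hva
  intro p q hp hq
  constructor
  · intro hpq
    refine ⟨hpq.ne, ?_⟩
    by_contra hcon
    push_neg at hcon
    obtain ⟨hpa, hqa⟩ := hcon
    exact hnt a p q ha (key p hp hpa) hpq (key q hq hqa)
  · rintro ⟨hne, h | h⟩
    · subst h
      exact (key q hq (fun hh => hne hh.symm)).symm.symm
    · subst h
      exact (key p hp hne).symm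

lemma mainLemma {W : Type*} {H : SimpleGraph W} (S : Set W) (hne : S.Nonempty)
    (hS : ∀ x y, H.Adj x y → x ∈ S → y ∈ S)
    (hreach : ∀ x y, x ∈ S → y ∈ S → H.Reachable x y)
    (hP4 : ∀ a b c d, H.Adj a b → H.Adj b c → H.Adj c d →
      a ≠ c → a ≠ d → b ≠ d → False) :
    (∃ a c d, a ∈ S ∧ c ∈ S ∧ d ∈ S ∧ a ≠ c ∧ a ≠ d ∧ c ≠ d ∧ S = {a, c, d} ∧
      (∀ x y, x ∈ S → y ∈ S → (H.Adj x y ↔ x ≠ y))) ∨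
    (∃ x, x ∈ S ∧ ∀ p q, p ∈ S → q ∈ S →
      (H.Adj p q ↔ p ≠ q ∧ (p = x ∨ q = x))) := by
  obtain ⟨a0, ha0⟩ := hne
  by_cases htri : ∃ x y z, x ∈ S ∧ H.Adj x y ∧ H.Adj y z ∧ H.Adj x z
  · left
    obtain ⟨x, y, z, hxS, hxy, hyz, hxz⟩ := htri
    have hyS : y ∈ S := hS _ _ hxy hxS
    have hzS : z ∈ S := hS _ _ hxz hxS
    have hall : ∀ v ∈ S, v = x ∨ v = y ∨ v = z := by
      intro v hv
      have step : ∀ p q, p ∈ S → q ∈ S → H.Adj p q →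
          (p = x ∨ p = y ∨ p = z) → (q = x ∨ q = y ∨ q = z) := by
        intro p q hpS hqS hpq hp
        by_contra hq
        push_neg at hq
        obtain ⟨hqx, hqy, hqz⟩ := hq
        rcases hp with rfl | rfl | rfl
        · exact hP4 q p y z hpq.symm hxy hyz hqy hqz hxz.ne
        · exact hP4 q p x z hpq.symm hxy.symm hxz hqx hqz hyz.ne
        · exact hP4 q p x y hpq.symm hxz.symm hxy hqx hqy (fun h => hyz.ne h.symm)
      exact reachInd hS step (hreach x v hxS hv).some hxS (Or.inl rfl)
    refine ⟨x, y, z, hxS, hyS, hzS, hxy.ne, hxz.ne, hyz.ne, ?_, ?_⟩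
    · ext v
      constructor
      · intro hv
        rcases hall v hv with rfl | rfl | rfl <;> simp
      · intro hv
        rcases hv with rfl | rfl | rfl
        · exact hxS
        · exact hyS
        · exact hzS
    · intro p q hp hq
      refine ⟨fun h => h.ne, fun hpq => ?_⟩
      rcases hall p hp with rfl | rfl | rfl <;>
        rcases hall q hq with rfl | rfl | rfl <;>
        first
          | exact absurd rfl hpq
          | assumption
          | exact hxy.symm
          | exact hxz.symm
          | exact hyz.symm
  · right
    push_neg at htri
    have hnt : ∀ x y z, x ∈ S → H.Adj x y → H.Adj y z → H.Adj x z → False :=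
      fun x y z hx h1 h2 h3 => htri x y z hx h1 h2 h3
    by_cases hone : ∀ v ∈ S, v = a0
    · refine ⟨a0, ha0, fun p q hp hq => ⟨fun h => absurd ((hone p hp).trans (hone q hq).symm) h.ne,
        fun h => absurd ((hone p hp).trans (hone q hq).symm) h.1⟩⟩
    · push_neg at hone
      obtain ⟨b, hbS, hba⟩ := hone
      -- get a neighbor c of a0 in S
      obtain ⟨c, hac⟩ : ∃ c : W, H.Adj a0 c := by
        obtain ⟨w⟩ := hreach a0 b ha0 hbS
        cases w with
        | nil => exact absurd rfl hba.symm
        | cons h p => exact ⟨_, h⟩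
      have hcS : c ∈ S := hS _ _ hac ha0
      -- invariant: every vertex of S is a0, c, or adjacent to one of them
      have hP : ∀ v ∈ S, v = a0 ∨ v = c ∨ H.Adj a0 v ∨ H.Adj c v := by
        intro v hv
        have step : ∀ p q, p ∈ S → q ∈ S → H.Adj p q →
            (p = a0 ∨ p = c ∨ H.Adj a0 p ∨ H.Adj c p) →
            (q = a0 ∨ q = c ∨ H.Adj a0 q ∨ H.Adj c q) := by
          intro p q hpS hqS hpq hp
          by_contra hq
          push_neg at hq
          obtain ⟨hqa, hqc, hqA, hqC⟩ := hq
          rcases hp with rfl | rfl | h | h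
          · exact hqA hpq
          · exact hqC hpq
          · by_cases hpc : p = c
            · exact hqC (hpc ▸ hpq)
            · exact hP4 q p a0 c hpq.symm h.symm hac hqa hqc hpc
          · by_cases hpa : p = a0
            · exact hqA (hpa ▸ hpq)
            · exact hP4 q p c a0 hpq.symm h.symm hac.symm hqc hqa hpa
        exact reachInd hS step (hreach a0 v ha0 hv).some ha0 (Or.inl rfl)
      by_cases hcA : ∀ w ∈ S, H.Adj c w → w = a0
      · exact ⟨a0, ha0, starChar ha0 hac hnt hP hcA⟩
      · push_neg at hcA
        obtain ⟨w, hwS, hcw, hwa⟩ := hcA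
        have haC : ∀ v ∈ S, H.Adj a0 v → v = c := by
          intro v hv hav
          by_contra hvc
          have hvw : v ≠ w := by
            rintro rfl
            exact hnt a0 v c ha0 hav (hcw.symm) hac
          exact hP4 v a0 c w hav.symm hac hcw hvc hvw (fun h => hwa h.symm)
        have hP' : ∀ v ∈ S, v = c ∨ v = a0 ∨ H.Adj c v ∨ H.Adj a0 v := by
          intro v hv
          rcases hP v hv with h | h | h | h
          · exact Or.inr (Or.inl h)
          · exact Or.inl h
          · exact Or.inr (Or.inr (Or.inr h))
          · exact Or.inr (Or.inr (Or.inl h))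
        exact ⟨c, hcS, starChar hcS hac.symm hnt hP' haC⟩


lemma isoTop {W : Type*} [Fintype W] (K : SimpleGraph W) (h3 : Fintype.card W = 3)
    (h : ∀ x y, K.Adj x y ↔ x ≠ y) : Nonempty (K ≃g (⊤ : SimpleGraph (Fin 3))) := by
  refine ⟨⟨Fintype.equivFinOfCardEq h3, ?_⟩⟩
  intro p q
  simp only [top_adj, h]
  exact (Fintype.equivFinOfCardEq h3).injective.ne_iff

lemma isoStar {W : Type*} [Fintype W] (K : SimpleGraph W) (x : W)
    (h : ∀ a b, K.Adj a b ↔ a ≠ b ∧ (a = x ∨ b = x)) :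
    ∃ r, Nonempty (K ≃g starG r) := by
  have hpos : 0 < Fintype.card W := Fintype.card_pos_iff.mpr ⟨x⟩
  refine ⟨Fintype.card W - 1, ?_⟩
  have hcard : Fintype.card W = Fintype.card W - 1 + 1 := (Nat.succ_pred_eq_of_pos hpos).symm
  let e0 := Fintype.equivFinOfCardEq hcard
  let e := e0.trans (Equiv.swap (e0 x) 0)
  have hex : e x = 0 := Equiv.swap_apply_left _ _
  have hinj : ∀ a : W, e a = 0 ↔ a = x := by
    intro a
    rw [← hex]
    exact e.injective.eq_iff
  refine ⟨⟨e, ?_⟩⟩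
  intro p q
  simp only [starG, fromRel_adj, h]
  rw [hinj, hinj]
  constructor
  · rintro ⟨hne, hh⟩
    exact ⟨fun hc => hne (congrArg e hc), by tauto⟩
  · rintro ⟨hne, hh⟩
    exact ⟨fun hc => hne (e.injective hc), by tauto⟩


theorem stmt7 {V : Type*} [Fintype V] (G : SimpleGraph V)
    (hgf : ¬ ContainsCopy gem G) (u : V) :
    ∀ C : (G.induce (G.neighborSet u)).ConnectedComponent,
      Nonempty (((G.induce (G.neighborSet u)).induce C.supp) ≃g (⊤ : SimpleGraph (Fin 3))) ∨
      ∃ r, Nonempty (((G.induce (G.neighborSet u)).induce C.supp) ≃g starG r) := by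
  intro C
  haveI : Fintype ↥C.supp := Fintype.ofFinite _
  have hS : ∀ x y, (G.induce (G.neighborSet u)).Adj x y → x ∈ C.supp → y ∈ C.supp := by
    intro x y hxy hx
    rw [ConnectedComponent.mem_supp_iff] at hx ⊢
    rw [← hx]
    exact ConnectedComponent.eq.mpr hxy.symm.reachable
  have hreach : ∀ x y, x ∈ C.supp → y ∈ C.supp →
      (G.induce (G.neighborSet u)).Reachable x y := by
    intro x y hx hy
    rw [ConnectedComponent.mem_supp_iff] at hx hy
    exact ConnectedComponent.eq.mp (hx.trans hy.symm)
  have hne : (C.supp : Set ↥(G.neighborSet u)).Nonempty := by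
    obtain ⟨v, hv⟩ := C.exists_rep
    exact ⟨v, hv⟩
  have hP4 : ∀ a b c d : ↥(G.neighborSet u), (G.induce (G.neighborSet u)).Adj a b →
      (G.induce (G.neighborSet u)).Adj b c → (G.induce (G.neighborSet u)).Adj c d →
      a ≠ c → a ≠ d → b ≠ d → False := by
    intro a b c d hab hbc hcd hac had hbd
    exact hgf (gemCopy G hab hbc hcd a.2 b.2 c.2 d.2
      (Subtype.coe_ne_coe.mpr hac) (Subtype.coe_ne_coe.mpr had) (Subtype.coe_ne_coe.mpr hbd))
  rcases mainLemma C.supp hne hS hreach hP4 with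
    ⟨a, c, d, haS, hcS, hdS, hac, had, hcd, hSeq, hadj⟩ | ⟨x, hxS, hchar⟩
  · left
    apply isoTop
    · rw [← Nat.card_eq_fintype_card, Nat.card_coe_set_eq]
      exact Set.ncard_eq_three.mpr ⟨a, c, d, hac, had, hcd, hSeq⟩
    · intro p q
      rw [show (((G.induce (G.neighborSet u)).induce C.supp).Adj p q ↔
        (G.induce (G.neighborSet u)).Adj ↑p ↑q) from Iff.rfl, hadj _ _ p.2 q.2]
      exact Subtype.coe_ne_coe
  · right
    apply isoStar (x := ⟨x, hxS⟩)
    intro p q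
    rw [show (((G.induce (G.neighborSet u)).induce C.supp).Adj p q ↔
      (G.induce (G.neighborSet u)).Adj ↑p ↑q) from Iff.rfl, hchar _ _ p.2 q.2]
    constructor
    · rintro ⟨h1, h2⟩
      exact ⟨Subtype.coe_ne_coe.mp h1, by
        rcases h2 with h | h
        · exact Or.inl (Subtype.ext h)
        · exact Or.inr (Subtype.ext h)⟩
    · rintro ⟨h1, h2⟩
      refine ⟨Subtype.coe_ne_coe.mpr h1, ?_⟩
      rcases h2 with rfl | rfl
      · exact Or.inl rfl
      · exact Or.inr rfl
end

section
/- If w is a vertex outside N[û] adjacent to two vertices of a triangle {u_1,u_2,u_3} contained in N(û), then the graph contains a gem (H_5) as a subgraph. -/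
open scoped Classical
open SimpleGraph Matrix

theorem containsCopy_gem_of_path_of_hub {V : Type*} {G : SimpleGraph V} {a b c d e : V}
    (hab : G.Adj a b) (hbc : G.Adj b c) (hcd : G.Adj c d)
    (hea : G.Adj e a) (heb : G.Adj e b) (hec : G.Adj e c) (hed : G.Adj e d)
    (hac : a ≠ c) (had : a ≠ d) (hbd : b ≠ d) :
    ContainsCopy gem G := by
  have hinj : Function.Injective ![a, b, c, d, e] := by
    intro x y hxy
    fin_cases x <;> fin_cases y <;>
      simp_all [hab.ne, hbc.ne, hcd.ne, hea.ne, heb.ne, hec.ne, hed.ne,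
        hab.ne', hbc.ne', hcd.ne', hea.ne', heb.ne', hec.ne', hed.ne', hac.symm, had.symm, hbd.symm]
  refine ⟨⟨_, hinj⟩, fun x y hxy => ?_⟩
  fin_cases x <;> fin_cases y <;>
    simp_all [gem, hab.symm, hbc.symm, hcd.symm, hea.symm, heb.symm, hec.symm, hed.symm]

theorem containsCopy_gem_of_adj_adj_of_triangle {V : Type*} {G : SimpleGraph V}
    {u w ui uj uk : V} (hui : G.Adj u ui) (huk : G.Adj u uk)
    (hij : G.Adj ui uj) (hik : G.Adj ui uk) (hjk : G.Adj uj uk)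
    (hwi : G.Adj w ui) (hwj : G.Adj w uj) (hwu : ¬ G.Adj u w) (hwne : w ≠ u) :
    ContainsCopy gem G :=
  -- path w, uj, uk, u with hub ui
  containsCopy_gem_of_path_of_hub hwj hjk huk.symm hwi.symm hij hik hui.symm
    (fun h => hwu (h ▸ huk)) hwne (fun h => hwu (h ▸ hwj.symm))

theorem stmt12 {V : Type*} (G : SimpleGraph V) (u w u₁ u₂ u₃ : V)
    (h1 : G.Adj u u₁) (h2 : G.Adj u u₂) (h3 : G.Adj u u₃)
    (h12 : G.Adj u₁ u₂) (h13 : G.Adj u₁ u₃) (h23 : G.Adj u₂ u₃)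
    (hwu : ¬ G.Adj u w) (hwne : w ≠ u)
    (hadj : (G.Adj w u₁ ∧ G.Adj w u₂) ∨ (G.Adj w u₁ ∧ G.Adj w u₃) ∨
      (G.Adj w u₂ ∧ G.Adj w u₃)) :
    ContainsCopy gem G := by
  rcases hadj with ⟨hw1, hw2⟩ | ⟨hw1, hw3⟩ | ⟨hw2, hw3⟩
  · exact containsCopy_gem_of_adj_adj_of_triangle h1 h3 h12 h13 h23 hw1 hw2 hwu hwne
  · exact containsCopy_gem_of_adj_adj_of_triangle h1 h2 h13 h12 h23.symm hw1 hw3 hwu hwne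
  · exact containsCopy_gem_of_adj_adj_of_triangle h2 h1 h23 h12.symm h13.symm hw2 hw3 hwu hwne
end

section
/- Let Ĝ be the spectral-extremal gem-free graph as above. If S ⊆ N_+(û) is such that every u ∈ S has x_u < (1−β)x_û and d_{N(û)}(u) ≥ 2 for some 0 < β < 1, then 0 < e(N_+(û)) − |N_+(û)| + 2 − β·Σ_{u∈S}(d_{N(û)}(u) − 1). -/
open scoped Classical
open SimpleGraph Matrix

/-!
The pendant book (a book with `(m - 3) / 2` pages and two pendant edges at a spine vertex) is a
gem-free graph with `m` edges, and a vector `y` with `A y = c y + e₀`, where `c² - c = m - 2`, has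
Rayleigh quotient above `c`; by maximality `ρ² - ρ > m - 2`.
Expanding `ρ² x_û` through the eigen-equation, bounding the entries by `x_û` (by `(1 - β) x_û` on
`S`) and counting the edges at `û`, inside `N_+(û)` and from `N(û)` to the rest against `m` gives
`(ρ² - ρ) x_û ≤ (m + e(N_+(û)) - |N_+(û)| - β Σ_{u ∈ S} (d_{N(û)}(u) - 1)) x_û`.
-/

open Finset

lemma specRad_bddAbove {V : Type*} [Fintype V] (G : SimpleGraph V) :
    BddAbove {μ : ℝ | Module.End.HasEigenvalue (Matrix.mulVecLin (G.adjMatrix ℝ)) μ} :=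
  (Module.End.finite_hasEigenvalue _).bddAbove

lemma exists_hasEigenvalue_dotProduct_mulVec_le {n : Type*} [Fintype n]
    {A : Matrix n n ℝ} (hA : A.IsHermitian) {y : n → ℝ} (hy : y ≠ 0) :
    ∃ μ, Module.End.HasEigenvalue (Matrix.mulVecLin A) μ ∧ y ⬝ᵥ (A *ᵥ y) ≤ μ * (y ⬝ᵥ y) := by
  set T := Matrix.toEuclideanLin A
  have hT : T.IsSymmetric := Matrix.isSymmetric_toEuclideanLin_iff.mpr hA
  have : Nontrivial (EuclideanSpace ℝ n) := ⟨⟨WithLp.toLp 2 y, 0, by simpa using hy⟩⟩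
  refine ⟨⨆ x : {x : EuclideanSpace ℝ n // x ≠ 0},
      RCLike.re (inner ℝ (T x) (x : EuclideanSpace ℝ n)) / ‖(x : EuclideanSpace ℝ n)‖ ^ 2, ?_, ?_⟩
  · obtain ⟨v, hv, hv0⟩ := hT.hasEigenvalue_iSup_of_finiteDimensional.exists_hasEigenvector
    refine Module.End.hasEigenvalue_of_hasEigenvector (x := WithLp.ofLp v) ⟨?_, by simpa using hv0⟩
    rw [Module.End.mem_eigenspace_iff] at hv ⊢
    exact congrArg WithLp.ofLp hv
  · have hbdd : BddAbove (Set.range fun x : {x : EuclideanSpace ℝ n // x ≠ 0} =>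
        RCLike.re (inner ℝ (T x) (x : EuclideanSpace ℝ n)) / ‖(x : EuclideanSpace ℝ n)‖ ^ 2) :=
      ⟨‖LinearMap.toContinuousLinearMap T‖, by
        rintro _ ⟨x, rfl⟩
        exact (le_abs_self _).trans
          ((LinearMap.toContinuousLinearMap T).rayleighQuotient_le_norm x)⟩
    have hy' : WithLp.toLp 2 y ≠ 0 := by simpa using hy
    have hquad : RCLike.re (inner ℝ (T (WithLp.toLp 2 y)) (WithLp.toLp 2 y)) = y ⬝ᵥ (A *ᵥ y) := by
      simp only [RCLike.re_to_real]
      exact (EuclideanSpace.inner_toLp_toLp (A *ᵥ y) y).trans (by simp)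
    have hnorm : ‖WithLp.toLp 2 y‖ ^ 2 = y ⬝ᵥ y := by
      rw [← real_inner_self_eq_norm_sq, EuclideanSpace.inner_toLp_toLp, star_trivial]
    have hpos : 0 < y ⬝ᵥ y := by rw [← hnorm]; positivity
    have := le_ciSup hbdd ⟨WithLp.toLp 2 y, hy'⟩
    dsimp only at this
    rwa [hquad, hnorm, div_le_iff₀ hpos] at this

lemma lt_specRad_of_mul_dotProduct_lt {V : Type*} [Fintype V] (G : SimpleGraph V) {y : V → ℝ}
    {c : ℝ} (h : c * (y ⬝ᵥ y) < y ⬝ᵥ (G.adjMatrix ℝ *ᵥ y)) : c < specRad G := by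
  have hy : y ≠ 0 := by rintro rfl; simp at h
  obtain ⟨μ, hμ, hle⟩ := exists_hasEigenvalue_dotProduct_mulVec_le (G.isHermitian_adjMatrix ℝ) hy
  have hyy : 0 ≤ y ⬝ᵥ y := sum_nonneg fun i _ => mul_self_nonneg (y i)
  exact (lt_of_mul_lt_mul_right (h.trans_le hle) hyy).trans_le (le_csSup (specRad_bddAbove G) hμ)

/-- The book with spine `0 1` and pages `2, …, s + 1`, plus the pendant vertices `s + 2, s + 3`
attached to `0`. -/
def pendantBook (s : ℕ) : SimpleGraph (Fin (s + 4)) :=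
  fromRel fun a b => a = 0 ∨ (a = 1 ∧ 2 ≤ b.val ∧ b.val ≤ s + 1)

namespace PendantBook

variable {s : ℕ}

def pages (s : ℕ) : Finset (Fin (s + 4)) := univ.filter fun v => 2 ≤ v.val ∧ v.val ≤ s + 1

def pendants (s : ℕ) : Finset (Fin (s + 4)) := univ.filter fun v => s + 2 ≤ v.val

lemma adj_iff {a b : Fin (s + 4)} : (pendantBook s).Adj a b ↔ a ≠ b ∧
    (a.val = 0 ∨ b.val = 0 ∨ (a.val = 1 ∧ 2 ≤ b.val ∧ b.val ≤ s + 1) ∨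
      (b.val = 1 ∧ 2 ≤ a.val ∧ a.val ≤ s + 1)) := by
  simp only [pendantBook, fromRel_adj, Fin.ext_iff, Fin.val_zero, Fin.val_one]
  tauto

lemma card_pages : (pages s).card = s := by
  have : pages s = (Finset.Icc 2 (s + 1)).attachFin fun k hk => by simp at hk; omega := by
    ext v; simp [pages]
  rw [this, card_attachFin]; simp

lemma card_pendants : (pendants s).card = 2 := by
  have : pendants s = (Finset.Icc (s + 2) (s + 3)).attachFin fun k hk => by simp at hk; omega := by
    ext v; simp [pendants]; omega
  rw [this, card_attachFin]; simp

lemma sum_erase_zero {M : Type*} [AddCommMonoid M] (f : Fin (s + 4) → M) :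
    ∑ v ∈ univ.erase 0, f v = f 1 + (∑ v ∈ pages s, f v + ∑ v ∈ pendants s, f v) := by
  have hsplit : univ.erase 0 = insert 1 (pages s ∪ pendants s) := by
    ext v
    simp only [mem_erase, mem_univ, and_true, mem_insert, mem_union,
      pages, pendants, mem_filter, true_and, ne_eq, Fin.ext_iff, Fin.val_zero, Fin.val_one]
    omega
  rw [hsplit, sum_insert, sum_union]
  · rw [Finset.disjoint_left]; intro v; simp [pages, pendants]; omega
  · simp [pages, pendants]

lemma sum_univ {M : Type*} [AddCommMonoid M] (f : Fin (s + 4) → M) :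
    ∑ v, f v = f 0 + (f 1 + (∑ v ∈ pages s, f v + ∑ v ∈ pendants s, f v)) := by
  rw [← add_sum_erase _ _ (mem_univ 0), sum_erase_zero]

lemma neighborFinset_zero : (pendantBook s).neighborFinset 0 = univ.erase 0 := by
  ext v
  simp only [mem_neighborFinset, adj_iff, mem_erase, mem_univ, and_true,
    ne_eq, Fin.ext_iff, Fin.val_zero, true_or]
  omega

lemma neighborFinset_one : (pendantBook s).neighborFinset 1 = insert 0 (pages s) := by
  ext v
  simp only [mem_neighborFinset, adj_iff, mem_insert, pages, mem_filter,
    mem_univ, true_and, ne_eq, Fin.ext_iff, Fin.val_zero, Fin.val_one]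
  omega

lemma neighborFinset_of_mem_pages {v : Fin (s + 4)} (hv : v ∈ pages s) :
    (pendantBook s).neighborFinset v = {0, 1} := by
  simp only [pages, mem_filter, mem_univ, true_and] at hv
  ext w
  simp only [mem_neighborFinset, adj_iff, mem_insert, mem_singleton,
    ne_eq, Fin.ext_iff, Fin.val_zero, Fin.val_one]
  omega

lemma neighborFinset_of_mem_pendants {v : Fin (s + 4)} (hv : v ∈ pendants s) :
    (pendantBook s).neighborFinset v = {0} := by
  simp only [pendants, mem_filter, mem_univ, true_and] at hv
  ext w
  simp only [mem_neighborFinset, adj_iff, mem_singleton, ne_eq, Fin.ext_iff,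
    Fin.val_zero]
  omega

lemma eq_zero_or_eq_one_or_mem_pages_or_mem_pendants (v : Fin (s + 4)) :
    v = 0 ∨ v = 1 ∨ v ∈ pages s ∨ v ∈ pendants s := by
  simp only [pages, pendants, mem_filter, mem_univ, true_and, Fin.ext_iff,
    Fin.val_zero, Fin.val_one]
  omega

lemma edgeCount_eq : edgeCount (pendantBook s) = 2 * s + 3 := by
  have h := (pendantBook s).sum_degrees_eq_twice_card_edges
  have hpages : ∑ v ∈ pages s, (pendantBook s).degree v = ∑ _v ∈ pages s, 2 :=
    sum_congr rfl fun v hv => by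
      rw [← card_neighborFinset_eq_degree, neighborFinset_of_mem_pages hv,
        card_pair Fin.zero_ne_one]
  have hpendants : ∑ v ∈ pendants s, (pendantBook s).degree v = ∑ _v ∈ pendants s, 1 :=
    sum_congr rfl fun v hv => by
      rw [← card_neighborFinset_eq_degree, neighborFinset_of_mem_pendants hv,
        card_singleton]
  rw [sum_univ, hpages, hpendants, ← card_neighborFinset_eq_degree,
    ← card_neighborFinset_eq_degree, neighborFinset_zero, neighborFinset_one,
    card_erase_of_mem (mem_univ _),
    card_insert_of_notMem (by simp [pages])] at h
  simp only [card_univ, Fintype.card_fin, card_pages, sum_const, card_pendants,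
    smul_eq_mul] at h
  rw [edgeCount]
  omega

lemma eq_or_eq_of_adj_of_adj_of_adj {v a b : Fin (s + 4)} (hva : (pendantBook s).Adj v a)
    (hvb : (pendantBook s).Adj v b) (hab : (pendantBook s).Adj a b) :
    a = (if v = 0 then 1 else 0) ∨ b = (if v = 0 then 1 else 0) := by
  rw [adj_iff] at hva hvb hab
  split_ifs with hv <;>
  · simp only [Fin.ext_iff, Fin.val_zero, Fin.val_one, ne_eq] at hv hva hvb hab ⊢
    omega

noncomputable def testVec (s : ℕ) (c : ℝ) : Fin (s + 4) → ℝ := fun v =>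
  if v.val = 0 then c * (c + s + 1) else if v.val = 1 then c * (c + s)
  else if v.val ≤ s + 1 then c * (c + 1) else c + s + 1

lemma adjMatrix_mulVec_testVec {c : ℝ} (hc : c ^ 2 = c + 2 * s + 1) :
    (pendantBook s).adjMatrix ℝ *ᵥ testVec s c = c • testVec s c + Pi.single 0 1 := by
  have hpages : ∀ v ∈ pages s, testVec s c v = c * (c + 1) := by
    intro v hv
    simp only [pages, mem_filter, mem_univ, true_and] at hv
    simp only [testVec, if_neg (show v.val ≠ 0 by omega), if_neg (show v.val ≠ 1 by omega),
      if_pos hv.2]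
  have hpendants : ∀ v ∈ pendants s, testVec s c v = c + s + 1 := by
    intro v hv
    simp only [pendants, mem_filter, mem_univ, true_and] at hv
    simp only [testVec, if_neg (show v.val ≠ 0 by omega), if_neg (show v.val ≠ 1 by omega),
      if_neg (show ¬ v.val ≤ s + 1 by omega)]
  have h0 : testVec s c 0 = c * (c + s + 1) := by simp [testVec]
  have h1 : testVec s c 1 = c * (c + s) := by simp [testVec]
  ext v
  rw [adjMatrix_mulVec_apply, Pi.add_apply, Pi.smul_apply, smul_eq_mul]
  rcases eq_zero_or_eq_one_or_mem_pages_or_mem_pendants v with rfl | rfl | hv | hv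
  · rw [neighborFinset_zero, sum_erase_zero, sum_congr rfl hpages,
      sum_congr rfl hpendants, sum_const, sum_const, card_pages,
      card_pendants, h0, h1, Pi.single_eq_same]
    simp only [nsmul_eq_mul, Nat.cast_ofNat]
    linear_combination (-c - 1) * hc
  · rw [neighborFinset_one, sum_insert (by simp [pages]), sum_congr rfl hpages,
      sum_const, card_pages, h0, h1, Pi.single_eq_of_ne (by simp)]
    simp only [nsmul_eq_mul]
    linear_combination (-c) * hc
  · rw [neighborFinset_of_mem_pages hv, sum_pair Fin.zero_ne_one, h0, h1, hpages v hv,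
      Pi.single_eq_of_ne (by rintro rfl; simp [pages] at hv)]
    linear_combination (-c) * hc
  · rw [neighborFinset_of_mem_pendants hv, sum_singleton, h0, hpendants v hv,
      Pi.single_eq_of_ne (by rintro rfl; simp [pendants] at hv)]
    ring

lemma lt_specRad {c : ℝ} (hc0 : 0 < c) (hc : c ^ 2 = c + 2 * s + 1) :
    c < specRad (pendantBook s) := by
  apply lt_specRad_of_mul_dotProduct_lt _ (y := testVec s c)
  rw [adjMatrix_mulVec_testVec hc, dotProduct_add, dotProduct_smul, smul_eq_mul,
    dotProduct_single, mul_one]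
  have : 0 < testVec s c 0 := by simp only [testVec, Fin.val_zero, if_pos]; positivity
  linarith

/- The apex of a gem sees the two disjoint edges `01` and `23`, whereas all edges inside a
neighbourhood of the pendant book share a vertex. -/
lemma not_containsCopy_gem : ¬ ContainsCopy gem (pendantBook s) := by
  rintro ⟨f, hf⟩
  have apex : ∀ i : Fin 5, i ≠ 4 → (pendantBook s).Adj (f 4) (f i) := fun i hi =>
    (hf i 4 (by simp [gem, hi])).symm
  have h01 := eq_or_eq_of_adj_of_adj_of_adj (apex 0 (by decide)) (apex 1 (by decide))
    (hf 0 1 (by simp [gem]))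
  have h23 := eq_or_eq_of_adj_of_adj_of_adj (apex 2 (by decide)) (apex 3 (by decide))
    (hf 2 3 (by simp [gem]))
  rcases h01 with h01 | h01 <;> rcases h23 with h23 | h23 <;>
    exact absurd (f.injective (h01.trans h23.symm)) (by decide)

lemma inFamily {m : ℕ} (hm : m = 2 * s + 3) : InFamily m (pendantBook s) := by
  refine ⟨not_containsCopy_gem, edgeCount_eq.trans hm.symm, fun v => ?_, ?_⟩
  · by_cases hv : v = 0
    · exact ⟨1, adj_iff.2 ⟨hv ▸ Fin.zero_ne_one, Or.inl (by rw [hv]; rfl)⟩⟩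
    · exact ⟨0, adj_iff.2 ⟨hv, Or.inr (Or.inl rfl)⟩⟩
  · rintro ⟨e⟩
    have := Fintype.card_congr e.toEquiv
    simp only [Fintype.card_fin, Fintype.card_sum] at this
    omega

end PendantBook

lemma sub_two_lt_specRad_sq_sub {V : Type*} [Fintype V] {G : SimpleGraph V} {m : ℕ} (hodd : Odd m)
    (hm : 3 ≤ m) (hmax : MaxInFamily m G) : (m : ℝ) - 2 < specRad G ^ 2 - specRad G := by
  obtain ⟨s, rfl⟩ : ∃ s, m = 2 * s + 3 := by obtain ⟨k, rfl⟩ := hodd; exact ⟨k - 1, by omega⟩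
  set c : ℝ := (1 + √(8 * s + 5)) / 2
  have hsq : √(8 * s + 5) ^ 2 = 8 * s + 5 := Real.sq_sqrt (by positivity)
  have hc1 : 1 < c := by
    have : 1 < √(8 * s + 5) := by rw [Real.lt_sqrt zero_le_one]; linarith [s.cast_nonneg (α := ℝ)]
    simp only [c]
    linarith
  have hc : c ^ 2 = c + 2 * s + 1 := by simp only [c]; linear_combination (1 / 4) * hsq
  have hρ : c < specRad G :=
    (PendantBook.lt_specRad (by linarith) hc).trans_le (hmax.2 _ _ (PendantBook.inFamily rfl))
  push_cast
  nlinarith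

section Neighbourhood

variable {V : Type*} [Fintype V] (G : SimpleGraph V)

lemma sum_card_neighborFinset_inter (s : Finset V) :
    ∑ w ∈ s, (G.neighborFinset w ∩ s).card = 2 * edgesIn G s := by
  set H := ((⊤ : G.Subgraph).induce (s : Set V)).spanningCoe
  have hnbhd : ∀ w, H.neighborFinset w = if w ∈ s then G.neighborFinset w ∩ s else ∅ := by
    intro w
    ext z
    split_ifs with hw <;> simp [H, hw, and_comm]
  have hedges : H.edgeFinset = G.edgeFinset.filter fun e => ∀ v ∈ e, v ∈ s := by
    ext e
    induction e with
    | h a b => simp [H, and_comm, and_assoc]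
  rw [edgesIn, ← hedges, ← H.sum_degrees_eq_twice_card_edges,
    ← sum_subset (subset_univ s) fun w _ hw => by
      rw [← card_neighborFinset_eq_degree, hnbhd, if_neg hw, card_empty]]
  refine sum_congr rfl fun w hw => ?_
  rw [← card_neighborFinset_eq_degree, hnbhd, if_pos hw]

variable {G} {u w : V}

lemma mem_Nplus_iff : w ∈ Nplus G u ↔ G.Adj u w ∧ ∃ z, G.Adj u z ∧ G.Adj w z := by
  simp only [Nplus, N0, mem_sdiff, mem_filter, mem_neighborFinset]
  push Not
  tauto

lemma Nplus_subset : Nplus G u ⊆ G.neighborFinset u := sdiff_subset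

lemma one_le_card_neighborFinset_inter (hw : w ∈ Nplus G u) :
    1 ≤ (G.neighborFinset w ∩ G.neighborFinset u).card := by
  obtain ⟨-, z, huz, hwz⟩ := mem_Nplus_iff.1 hw
  exact card_pos.2 ⟨z, by simp [huz, hwz]⟩

lemma card_neighborFinset_inter_eq_zero (hw : G.Adj u w) (hw' : w ∉ Nplus G u) :
    (G.neighborFinset w ∩ G.neighborFinset u).card = 0 := by
  refine card_eq_zero.2 (eq_empty_of_forall_notMem fun z hz => hw' ?_)
  simp only [mem_inter, mem_neighborFinset] at hz
  exact mem_Nplus_iff.2 ⟨hw, z, hz.2, hz.1⟩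

lemma neighborFinset_inter_eq_inter_Nplus (hw : w ∈ Nplus G u) :
    G.neighborFinset w ∩ G.neighborFinset u = G.neighborFinset w ∩ Nplus G u := by
  refine subset_antisymm (fun z hz => ?_) (inter_subset_inter_left Nplus_subset)
  simp only [mem_inter, mem_neighborFinset] at hz ⊢
  exact ⟨hz.1, mem_Nplus_iff.2 ⟨hz.2, w, (G.mem_neighborFinset _ _).1 (Nplus_subset hw),
    hz.1.symm⟩⟩

variable (G u)

lemma sum_card_neighborFinset_inter_Nplus :
    ∑ w ∈ Nplus G u, (G.neighborFinset w ∩ G.neighborFinset u).card =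
      2 * edgesIn G (Nplus G u) := by
  rw [← sum_card_neighborFinset_inter]
  exact sum_congr rfl fun w hw => by rw [neighborFinset_inter_eq_inter_Nplus hw]

lemma sum_card_neighborFinset_inter_Wset_le :
    ∑ v ∈ G.neighborFinset u, (G.neighborFinset v ∩ Wset G u).card ≤
      (G.edgeFinset.filter fun e => ∃ w ∈ e, w ∈ Wset G u).card := by
  rw [← card_sigma]
  refine card_le_card_of_injOn (fun p => s(p.1, p.2)) ?_ ?_
  · rintro ⟨v, w⟩ hp
    simp only [coe_sigma, Set.mem_sigma_iff, mem_coe, mem_inter, mem_neighborFinset] at hp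
    simp only [mem_coe, mem_filter, mem_edgeFinset, mem_edgeSet, Sym2.mem_iff]
    exact ⟨hp.2.1, w, Or.inr rfl, hp.2.2⟩
  · rintro ⟨v, w⟩ hp ⟨v', w'⟩ hp' heq
    simp only [coe_sigma, Set.mem_sigma_iff, mem_coe, mem_inter] at hp hp'
    rcases Sym2.eq_iff.1 heq with ⟨rfl, rfl⟩ | ⟨rfl, rfl⟩
    · rfl
    · simp only [Wset, mem_sdiff, mem_insert] at hp
      exact absurd (Or.inr hp'.1) hp.2.2.2

lemma card_neighborFinset_add_edgesIn_add_sum_le :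
    (G.neighborFinset u).card + edgesIn G (Nplus G u) +
      ∑ v ∈ G.neighborFinset u, (G.neighborFinset v ∩ Wset G u).card ≤ edgeCount G := by
  set E₁ := G.incidenceFinset u
  set E₂ := G.edgeFinset.filter fun e => ∀ v ∈ e, v ∈ Nplus G u
  set E₃ := G.edgeFinset.filter fun e => ∃ w ∈ e, w ∈ Wset G u
  have hclosed : ∀ e ∈ E₁ ∪ E₂, ∀ v ∈ e, v = u ∨ G.Adj u v := by
    intro e he v hv
    rcases mem_union.1 he with he | he
    · induction e with
      | h a b =>
        simp only [E₁, mem_incidenceFinset, incidenceSet, Set.mem_ofPred_eq, mem_edgeSet,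
          Sym2.mem_iff] at he hv
        rcases he with ⟨hab, rfl | rfl⟩ <;> rcases hv with rfl | rfl <;> simp [hab, hab.symm]
    · exact Or.inr ((G.mem_neighborFinset _ _).1 (Nplus_subset ((mem_filter.1 he).2 v hv)))
  have h₁₂ : Disjoint E₁ E₂ := Finset.disjoint_left.2 fun e he₁ he₂ =>
    G.loopless.irrefl u <| (G.mem_neighborFinset _ _).1 <| Nplus_subset <|
      (mem_filter.1 he₂).2 u ((G.mem_incidenceFinset _ _).1 he₁).2
  have h₁₂₃ : Disjoint (E₁ ∪ E₂) E₃ := Finset.disjoint_left.2 fun e he he₃ => by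
    obtain ⟨w, hw, hwW⟩ := (mem_filter.1 he₃).2
    simp only [Wset, mem_sdiff, mem_insert, mem_neighborFinset] at hwW
    exact hwW.2 (hclosed e he w hw)
  have hsub : E₁ ∪ E₂ ∪ E₃ ⊆ G.edgeFinset := by
    simp only [E₁, E₂, E₃, union_subset_iff, filter_subset, and_true]
    exact G.incidenceFinset_subset u
  calc _ ≤ E₁.card + E₂.card + E₃.card := by
        rw [G.card_incidenceFinset_eq_degree, ← G.card_neighborFinset_eq_degree]
        exact Nat.add_le_add_left (sum_card_neighborFinset_inter_Wset_le G u) _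
    _ = (E₁ ∪ E₂ ∪ E₃).card := by rw [card_union_of_disjoint h₁₂₃, card_union_of_disjoint h₁₂]
    _ ≤ edgeCount G := card_le_card hsub

end Neighbourhood

section EigenEquation

variable {V : Type*} [Fintype V] (G : SimpleGraph V) (u : V)

lemma sum_neighborFinset_eq_of_adj (f : V → ℝ) {v : V} (huv : G.Adj u v) :
    ∑ w ∈ G.neighborFinset v, f w =
      f u + ∑ w ∈ G.neighborFinset v ∩ G.neighborFinset u, f w +
        ∑ w ∈ G.neighborFinset v ∩ Wset G u, f w := by
  have hW : G.neighborFinset v ∩ Wset G u = G.neighborFinset v \ insert u (G.neighborFinset u) := by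
    rw [Wset, ← compl_eq_univ_sdiff, sdiff_eq_inter_compl]
  rw [hW, ← sum_inter_add_sum_sdiff _ (insert u (G.neighborFinset u)),
    inter_insert_of_mem (by simpa using huv.symm), sum_insert (by simp)]

lemma sum_sum_neighborFinset_inter (s : Finset V) (f : V → ℝ) :
    ∑ v ∈ s, ∑ w ∈ G.neighborFinset v ∩ s, f w = ∑ w ∈ s, (G.neighborFinset w ∩ s).card * f w := by
  rw [sum_comm' (t' := s) (s' := fun w => G.neighborFinset w ∩ s)]
  · simp only [sum_const, nsmul_eq_mul]
  · intro v w
    simp only [mem_inter, mem_neighborFinset, G.adj_comm v w]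
    tauto

variable {ρ : ℝ} {x : V → ℝ}

lemma sq_mul_eq_of_eigen (heig : ∀ v, ρ * x v = ∑ w ∈ G.neighborFinset v, x w) :
    ρ ^ 2 * x u = (G.neighborFinset u).card * x u +
      ∑ w ∈ Nplus G u, ((G.neighborFinset w ∩ G.neighborFinset u).card : ℝ) * x w +
        ∑ v ∈ G.neighborFinset u, ∑ w ∈ G.neighborFinset v ∩ Wset G u, x w := by
  have hcommon :
      ∑ w ∈ G.neighborFinset u, ((G.neighborFinset w ∩ G.neighborFinset u).card : ℝ) * x w
      = ∑ w ∈ Nplus G u, ((G.neighborFinset w ∩ G.neighborFinset u).card : ℝ) * x w := by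
    refine (sum_subset Nplus_subset fun w hw hw' => ?_).symm
    rw [card_neighborFinset_inter_eq_zero ((G.mem_neighborFinset _ _).1 hw) hw']
    simp
  calc ρ ^ 2 * x u = ∑ v ∈ G.neighborFinset u, ∑ w ∈ G.neighborFinset v, x w := by
        rw [sq, mul_assoc, heig, mul_sum]
        exact sum_congr rfl fun v _ => heig v
    _ = _ := by
        rw [sum_congr rfl fun v hv =>
            sum_neighborFinset_eq_of_adj G u x ((G.mem_neighborFinset _ _).1 hv),
          sum_add_distrib, sum_add_distrib, sum_sum_neighborFinset_inter, hcommon,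
          sum_const, nsmul_eq_mul]

lemma sq_sub_mul_le_of_eigen (heig : ∀ v, ρ * x v = ∑ w ∈ G.neighborFinset v, x w)
    (hx : ∀ v, 0 ≤ x v) (hu : ∀ v, x v ≤ x u) :
    (ρ ^ 2 - ρ) * x u ≤
      ((G.neighborFinset u).card + ∑ v ∈ G.neighborFinset u, (G.neighborFinset v ∩ Wset G u).card) *
          x u +
        ∑ w ∈ Nplus G u, (((G.neighborFinset w ∩ G.neighborFinset u).card : ℝ) - 1) * x w := by
  have hNplus : ∑ w ∈ Nplus G u, x w ≤ ρ * x u := by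
    rw [heig]
    exact sum_le_sum_of_subset_of_nonneg Nplus_subset fun w _ _ => hx w
  have hcross : ∑ v ∈ G.neighborFinset u, ∑ w ∈ G.neighborFinset v ∩ Wset G u, x w ≤
      (∑ v ∈ G.neighborFinset u, (G.neighborFinset v ∩ Wset G u).card : ℕ) * x u := by
    rw [Nat.cast_sum, sum_mul]
    exact sum_le_sum fun v _ => by
      simpa using sum_le_card_nsmul _ x (x u) fun w _ => hu w
  have hsplit : ∑ w ∈ Nplus G u, (((G.neighborFinset w ∩ G.neighborFinset u).card : ℝ) - 1) * x w =
      ∑ w ∈ Nplus G u, ((G.neighborFinset w ∩ G.neighborFinset u).card : ℝ) * x w -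
        ∑ w ∈ Nplus G u, x w := by
    rw [← sum_sub_distrib]
    exact sum_congr rfl fun w _ => by ring
  rw [sub_mul, sq_mul_eq_of_eigen G u heig, hsplit]
  push_cast at hcross ⊢
  linarith

end EigenEquation

lemma sum_card_inter_sub_one_mul_le {V : Type*} [Fintype V] (G : SimpleGraph V) (u : V)
    {x : V → ℝ} (hu : ∀ v, x v ≤ x u) {β : ℝ} {S : Finset V} (hS : S ⊆ Nplus G u)
    (hSx : ∀ v ∈ S, x v < (1 - β) * x u) :
    ∑ w ∈ Nplus G u, (((G.neighborFinset w ∩ G.neighborFinset u).card : ℝ) - 1) * x w ≤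
      (2 * edgesIn G (Nplus G u) - (Nplus G u).card -
        β * ∑ w ∈ S, (((G.neighborFinset w ∩ G.neighborFinset u).card : ℝ) - 1)) * x u := by
  set d : V → ℝ := fun w => ((G.neighborFinset w ∩ G.neighborFinset u).card : ℝ) - 1
  have hd : ∀ w ∈ Nplus G u, 0 ≤ d w := fun w hw => by
    simpa [d] using one_le_card_neighborFinset_inter hw
  have hsum : ∑ w ∈ Nplus G u, d w = 2 * edgesIn G (Nplus G u) - (Nplus G u).card := by
    simp only [d, sum_sub_distrib, sum_const, nsmul_eq_mul, mul_one]
    exact_mod_cast congrArg (fun n : ℕ => (n : ℝ) - (Nplus G u).card)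
      (sum_card_neighborFinset_inter_Nplus G u)
  calc ∑ w ∈ Nplus G u, d w * x w = ∑ w ∈ Nplus G u \ S, d w * x w + ∑ w ∈ S, d w * x w :=
        (sum_sdiff hS).symm
    _ ≤ ∑ w ∈ Nplus G u \ S, d w * x u + ∑ w ∈ S, d w * ((1 - β) * x u) := by
        gcongr with w hw w hw
        · exact hd w (mem_sdiff.1 hw).1
        · exact hu w
        · exact hd w (hS hw)
        · exact (hSx w hw).le
    _ = (∑ w ∈ Nplus G u, d w - β * ∑ w ∈ S, d w) * x u := by
        rw [← sum_sdiff hS, ← sum_mul, ← sum_mul]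
        ring
    _ = _ := by rw [hsum]

theorem stmt14_general {V : Type*} [Fintype V] (G : SimpleGraph V) (m : ℕ)
    (hodd : Odd m) (hm : 23 ≤ m) (hmax : MaxInFamily m G)
    (x : V → ℝ) (hx : ∀ v, 0 < x v)
    (heig : G.adjMatrix ℝ *ᵥ x = specRad G • x)
    (u : V) (hu : ∀ v, x v ≤ x u)
    (β : ℝ)
    (S : Finset V) (hS : S ⊆ Nplus G u)
    (hSx : ∀ v ∈ S, x v < (1 - β) * x u) :
    0 < (edgesIn G (Nplus G u) : ℝ) - (Nplus G u).card + 2 -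
      β * ∑ v ∈ S, (((G.neighborFinset v ∩ G.neighborFinset u).card : ℝ) - 1) := by
  have hρ := sub_two_lt_specRad_sq_sub hodd (by omega) hmax
  have heig' : ∀ v, specRad G * x v = ∑ w ∈ G.neighborFinset v, x w := fun v => by
    simpa [adjMatrix_mulVec_apply] using (congrFun heig v).symm
  have hupper := (sq_sub_mul_le_of_eigen G u heig' (fun v => (hx v).le) hu).trans
    (add_le_add_right (sum_card_inter_sub_one_mul_le G u hu hS hSx) _)
  have hcount : ((G.neighborFinset u).card + edgesIn G (Nplus G u) +
      ∑ v ∈ G.neighborFinset u, (G.neighborFinset v ∩ Wset G u).card : ℕ) ≤ (m : ℝ) := by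
    exact_mod_cast hmax.1.2.1 ▸ card_neighborFinset_add_edgesIn_add_sum_le G u
  push_cast at hupper hcount
  rw [← add_mul] at hupper
  have hlt : ((m : ℝ) - 2) * x u < ((m : ℝ) + edgesIn G (Nplus G u) - (Nplus G u).card -
      β * ∑ v ∈ S, (((G.neighborFinset v ∩ G.neighborFinset u).card : ℝ) - 1)) * x u :=
    (mul_lt_mul_of_pos_right hρ (hx u)).trans_le
      (hupper.trans (mul_le_mul_of_nonneg_right (by linarith) (hx u).le))
  linarith [lt_of_mul_lt_mul_right hlt (hx u).le]

theorem stmt14 {V : Type*} [Fintype V] (G : SimpleGraph V) (m : ℕ)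
    (hodd : Odd m) (hm : 23 ≤ m) (hmax : MaxInFamily m G)
    (x : V → ℝ) (hx : ∀ v, 0 < x v)
    (heig : G.adjMatrix ℝ *ᵥ x = specRad G • x)
    (u : V) (hu : ∀ v, x v ≤ x u)
    (β : ℝ) (hβ0 : 0 < β) (hβ1 : β < 1)
    (S : Finset V) (hS : S ⊆ Nplus G u)
    (hSx : ∀ v ∈ S, x v < (1 - β) * x u)
    (hSd : ∀ v ∈ S, 2 ≤ (G.neighborFinset v ∩ G.neighborFinset u).card) :
    0 < (edgesIn G (Nplus G u) : ℝ) - (Nplus G u).card + 2 -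
      β * ∑ v ∈ S, (((G.neighborFinset v ∩ G.neighborFinset u).card : ℝ) - 1) :=
  stmt14_general G m hodd hm hmax x hx heig u hu β S hS hSx
end
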